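/- arXiv:2411.00657 — 7 statements merged into one kernel-verified Lean document; each statement's English description precedes it below -/
import Mathlib

section
/- Let k and n be positive integers such that k is odd and k divides n. Then there exists a Borel probability measure Ξ on ℝ^k such that Ξ-almost every vector z = (z_1, ..., z_k) satisfies z_1 = z_2 = ... = z_k ≥ 0, and such that for every nonempty subset C ⊆ {1, ..., k} with |C| ≤ k − 1, the mixed moment ∫_{ℝ^k} ∏_{i∈C} z_i dΞ(z) equals (k/n) · C(n, |C|+1) / C(k, |C|+1). -/
open MeasureTheory


lemma beta_nat (b : ℕ) : ∀ p : ℕ, ∫ x in (0:ℝ)..1, x^p * (1-x)^b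
    = (p.factorial * b.factorial : ℝ) / (p+b+1).factorial := by
  induction b with
  | zero =>
    intro p
    have hp : ((p:ℝ)+1) ≠ 0 := by positivity
    have hf : ((p.factorial : ℝ)) ≠ 0 := by exact_mod_cast p.factorial_ne_zero
    rw [show p + 0 + 1 = p + 1 by ring]
    simp [integral_pow, Nat.factorial_succ]
    field_simp
  | succ b ih =>
    intro p
    have hp : ((p:ℝ)+1) ≠ 0 := by positivity
    have hu : ∀ x : ℝ, HasDerivAt (fun y : ℝ => y ^ (p+1) / ((p:ℝ)+1)) (x ^ p) x := by
      intro x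
      have := (hasDerivAt_pow (p+1) x).div_const ((p:ℝ)+1)
      simp only [Nat.cast_add, Nat.cast_one, Nat.add_sub_cancel] at this
      simpa [mul_div_assoc, mul_comm, mul_div_cancel_left₀, hp] using this
    have hv : ∀ x : ℝ, HasDerivAt (fun y : ℝ => (1-y) ^ (b+1))
        (-(((b:ℝ)+1) * (1-x) ^ b)) x := by
      intro x
      have h1 : HasDerivAt (fun y : ℝ => 1 - y) (-1) x := by
        simpa using (hasDerivAt_id x).const_sub 1
      have := h1.pow (b+1)
      simp only [Nat.cast_add, Nat.cast_one, Nat.add_sub_cancel] at this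
      refine this.congr_deriv ?_
      ring
    have key : ∫ x in (0:ℝ)..1, (1-x)^(b+1) * x^p
        = (1-(1:ℝ))^(b+1) * ((1:ℝ)^(p+1)/((p:ℝ)+1)) - (1-(0:ℝ))^(b+1) * ((0:ℝ)^(p+1)/((p:ℝ)+1))
          - ∫ x in (0:ℝ)..1, (-(((b:ℝ)+1) * (1-x)^b)) * (x^(p+1)/((p:ℝ)+1)) :=
      intervalIntegral.integral_mul_deriv_eq_deriv_mul
        (fun x _ => hv x) (fun x _ => hu x)
        (by apply Continuous.intervalIntegrable; continuity)
        (by apply Continuous.intervalIntegrable; continuity)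
    have e2 : ∫ x in (0:ℝ)..1, (-(((b:ℝ)+1) * (1-x)^b)) * (x^(p+1)/((p:ℝ)+1))
        = (-(((b:ℝ)+1)/((p:ℝ)+1))) * ∫ x in (0:ℝ)..1, x^(p+1) * (1-x)^b := by
      rw [← intervalIntegral.integral_const_mul]
      apply intervalIntegral.integral_congr
      intro x _
      ring
    have e1 : ∫ x in (0:ℝ)..1, x^p * (1-x)^(b+1) = ∫ x in (0:ℝ)..1, (1-x)^(b+1) * x^p := by
      apply intervalIntegral.integral_congr
      intro x _
      ring
    rw [e1, key, e2, ih (p+1)]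
    have h1 : ((p+1+b+1).factorial : ℝ) ≠ 0 := by exact_mod_cast (p+1+b+1).factorial_ne_zero
    have h2 : ((p+(b+1)+1).factorial : ℝ) ≠ 0 := by exact_mod_cast (p+(b+1)+1).factorial_ne_zero
    have h3 : p+1+b+1 = p+(b+1)+1 := by ring
    rw [h3] at h1
    simp only [h3, Nat.factorial_succ p, Nat.factorial_succ b]
    push_cast
    field_simp
    ring

lemma natId (k n m : ℕ) (h1 : m + 1 ≤ k) (h2 : k ≤ n) :
    (n-1).factorial * (k-1-m).factorial * k.choose (m+1) * n
      = (n-1-m).factorial * (k-1).factorial * n.choose (m+1) * k := by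
  have hA := Nat.choose_mul_factorial_mul_factorial h1
  have hB := Nat.choose_mul_factorial_mul_factorial (h1.trans h2)
  have e1 : k - (m+1) = k - 1 - m := by omega
  have e2 : n - (m+1) = n - 1 - m := by omega
  rw [e1] at hA; rw [e2] at hB
  have hk : k * (k-1).factorial = k.factorial := Nat.mul_factorial_pred (by omega)
  have hn : n * (n-1).factorial = n.factorial := Nat.mul_factorial_pred (by omega)
  apply Nat.eq_of_mul_eq_mul_left (Nat.factorial_pos (m+1))
  calc (m+1).factorial * ((n-1).factorial * (k-1-m).factorial * k.choose (m+1) * n)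
      = (k.choose (m+1) * (m+1).factorial * (k-1-m).factorial) * (n * (n-1).factorial) := by ring
    _ = k.factorial * n.factorial := by rw [hA, hn]
    _ = (n.choose (m+1) * (m+1).factorial * (n-1-m).factorial) * (k * (k-1).factorial) := by
        rw [hB, hk]; ring
    _ = (m+1).factorial * ((n-1-m).factorial * (k-1).factorial * n.choose (m+1) * k) := by ring

/-- Existence of a probability measure on ℝ^k, concentrated on the
nonnegative diagonal, with the prescribed mixed moments. -/
theorem stmt2 (k n : ℕ) (hk : 0 < k) (hn : 0 < n) (hodd : Odd k) (hdvd : k ∣ n) :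
    ∃ Ξ : Measure (Fin k → ℝ), IsProbabilityMeasure Ξ ∧
      (∀ᵐ z ∂Ξ, (∀ i j : Fin k, z i = z j) ∧ ∀ i : Fin k, 0 ≤ z i) ∧
      ∀ C : Finset (Fin k), C.Nonempty → C.card ≤ k - 1 →
        ∫ z, ∏ i ∈ C, z i ∂Ξ =
          ((k : ℝ) / n) * (n.choose (C.card + 1)) / (k.choose (C.card + 1)) := by
  have hkn : k ≤ n := Nat.le_of_dvd hn hdvd
  rcases eq_or_lt_of_le hkn with heq | hlt
  · -- k = n : dirac at constant 1
    subst heq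
    refine ⟨Measure.dirac (fun _ : Fin k => (1:ℝ)), inferInstance, ?_, ?_⟩
    · rw [MeasureTheory.ae_dirac_eq]
      exact Filter.eventually_pure.mpr ⟨fun i j => rfl, fun i => zero_le_one⟩
    · intro C hC hCcard
      have hch : (0:ℝ) < k.choose (C.card + 1) := by
        have : C.card + 1 ≤ k := by omega
        exact_mod_cast Nat.choose_pos this
      rw [integral_dirac]
      simp only [Finset.prod_const_one]
      rw [div_self (by positivity : (k:ℝ) ≠ 0)]
      field_simp
  · -- k < n : pushforward of inverse-Beta
    set b := n - k - 1 with hb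
    set c : ℝ := (n-1).factorial / ((k-1).factorial * (n-k-1).factorial) with hc
    have hcpos : 0 < c := by positivity
    set ρ : ℝ → ℝ := fun t => c * (t^(k-1) * (1-t)^(n-k-1)) with hρ
    have hρcont : Continuous ρ := by continuity
    set μ : Measure ℝ :=
      (volume.restrict (Set.Ioo (0:ℝ) 1)).withDensity (fun t => ENNReal.ofReal (ρ t)) with hμ
    have hIoo : ∀ p : ℕ, ∫ t in Set.Ioo (0:ℝ) 1, t^p * (1-t)^(n-k-1)
        = (p.factorial * (n-k-1).factorial : ℝ)/(p+(n-k-1)+1).factorial := by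
      intro p
      rw [← MeasureTheory.integral_Ioc_eq_integral_Ioo,
        ← intervalIntegral.integral_of_le (zero_le_one)]
      exact beta_nat _ p
    -- moments of μ under t ↦ t⁻¹
    have hmom : ∀ m : ℕ, m ≤ k - 1 → ∫ t, (t⁻¹)^m ∂μ
        = c * (((k-1-m).factorial * (n-k-1).factorial : ℝ)/(n-1-m).factorial) := by
      intro m hm
      have hmeasρ : Measurable fun t => (ρ t).toNNReal :=
        (hρcont.measurable).real_toNNReal
      have h1 : ∫ t, (t⁻¹)^m ∂μ
          = ∫ t in Set.Ioo (0:ℝ) 1, ((ρ t).toNNReal : ℝ) • (t⁻¹)^m := by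
        rw [hμ]
        exact integral_withDensity_eq_integral_smul hmeasρ _
      rw [h1]
      have h2 : ∫ t in Set.Ioo (0:ℝ) 1, ((ρ t).toNNReal : ℝ) • (t⁻¹)^m
          = ∫ t in Set.Ioo (0:ℝ) 1, c * (t^(k-1-m) * (1-t)^(n-k-1)) := by
        apply setIntegral_congr_fun measurableSet_Ioo
        intro t ht
        have ht0 : (0:ℝ) < t := ht.1
        have ht1 : t < 1 := ht.2
        have hρnn : 0 ≤ ρ t := by
          apply mul_nonneg hcpos.le
          apply mul_nonneg (pow_nonneg ht0.le _) (pow_nonneg (by linarith) _)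
        dsimp only
        rw [smul_eq_mul, Real.coe_toNNReal _ hρnn]
        have hpow : t^(k-1) = t^(k-1-m) * t^m := by
          rw [← pow_add]; congr 1; omega
        rw [hρ]
        simp only []
        rw [hpow]
        field_simp
        rw [mul_right_comm, ← mul_pow, mul_one_div_cancel ht0.ne', one_pow, one_mul]
      rw [h2, integral_const_mul, hIoo (k-1-m),
        show (k-1-m)+(n-k-1)+1 = n-1-m from by omega]
    -- μ is a probability measure
    have hμuniv : IsProbabilityMeasure μ := by
      constructor
      rw [hμ, withDensity_apply _ MeasurableSet.univ, Measure.restrict_univ]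
      have hint : Integrable ρ (volume.restrict (Set.Ioo (0:ℝ) 1)) :=
        (hρcont.integrableOn_Icc).mono_set Set.Ioo_subset_Icc_self
      have hae : 0 ≤ᵐ[volume.restrict (Set.Ioo (0:ℝ) 1)] ρ := by
        filter_upwards [ae_restrict_mem measurableSet_Ioo] with t ht
        apply mul_nonneg hcpos.le
        apply mul_nonneg (pow_nonneg ht.1.le _) (pow_nonneg (by nlinarith [ht.2]) _)
      rw [← MeasureTheory.ofReal_integral_eq_lintegral_ofReal hint hae]
      have : ∫ t in Set.Ioo (0:ℝ) 1, ρ t = 1 := by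
        rw [hρ]
        simp only []
        rw [integral_const_mul, hIoo (k-1)]
        rw [show (k-1)+(n-k-1)+1 = n-1 from by omega, hc]
        field_simp
      rw [this, ENNReal.ofReal_one]
    set f : ℝ → (Fin k → ℝ) := fun t _ => t⁻¹ with hf
    have hfmeas : Measurable f := measurable_pi_lambda _ (fun _ => measurable_inv)
    refine ⟨μ.map f, Measure.isProbabilityMeasure_map hfmeas.aemeasurable, ?_, ?_⟩
    · -- a.e. diagonal and nonneg
      have hset : MeasurableSet {z : Fin k → ℝ |
          (∀ i j : Fin k, z i = z j) ∧ ∀ i : Fin k, 0 ≤ z i} := by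
        have heq : {z : Fin k → ℝ | (∀ i j : Fin k, z i = z j) ∧ ∀ i : Fin k, 0 ≤ z i}
            = (⋂ i, ⋂ j, {z : Fin k → ℝ | z i = z j}) ∩ ⋂ i, {z : Fin k → ℝ | 0 ≤ z i} := by
          ext z; simp [Set.mem_iInter]
        rw [heq]
        apply MeasurableSet.inter
        · exact MeasurableSet.iInter fun i => MeasurableSet.iInter fun j =>
            measurableSet_eq_fun (measurable_pi_apply i) (measurable_pi_apply j)
        · exact MeasurableSet.iInter fun i =>
            measurableSet_le measurable_const (measurable_pi_apply i)
      rw [MeasureTheory.ae_map_iff hfmeas.aemeasurable hset]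
      have hIoomem : ∀ᵐ t ∂μ, t ∈ Set.Ioo (0:ℝ) 1 := by
        apply Filter.Eventually.filter_mono
          ((withDensity_absolutelyContinuous _ _).ae_le)
        exact ae_restrict_mem measurableSet_Ioo
      filter_upwards [hIoomem] with t ht
      refine ⟨fun i j => rfl, fun i => ?_⟩
      exact inv_nonneg.mpr ht.1.le
    · -- moments
      intro C hC hCcard
      have hm1 : 1 ≤ C.card := hC.card_pos
      have hchoose : C.card + 1 ≤ k := by omega
      have hprodmeas : AEStronglyMeasurable (fun z : Fin k → ℝ => ∏ i ∈ C, z i)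
          (μ.map f) := by
        apply Continuous.aestronglyMeasurable
        exact continuous_finset_prod _ (fun i _ => continuous_apply i)
      rw [MeasureTheory.integral_map hfmeas.aemeasurable hprodmeas]
      simp only [hf, Finset.prod_const]
      rw [hmom C.card hCcard, hc]
      -- final arithmetic
      set m := C.card with hmdef
      have key : ((n-1).factorial : ℝ) * (k-1-m).factorial * (k.choose (m+1)) * n
          = ((n-1-m).factorial : ℝ) * (k-1).factorial * (n.choose (m+1)) * k := by
        exact_mod_cast congrArg (Nat.cast (R := ℝ)) (natId k n m hchoose hkn)
      have hkf : ((k-1).factorial : ℝ) ≠ 0 := by exact_mod_cast (k-1).factorial_ne_zero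
      have hnkf : ((n-k-1).factorial : ℝ) ≠ 0 := by exact_mod_cast (n-k-1).factorial_ne_zero
      have hnmf : ((n-1-m).factorial : ℝ) ≠ 0 := by exact_mod_cast (n-1-m).factorial_ne_zero
      have hn0 : (n:ℝ) ≠ 0 := by positivity
      have hck : (k.choose (m+1) : ℝ) ≠ 0 := by
        exact_mod_cast (Nat.choose_pos hchoose).ne'
      field_simp
      linear_combination key
end

section
/- Let k and n be positive integers such that k is odd and k divides n. Then there exists a Borel probability measure μ on the half-line [0, ∞) such that ∫_0^∞ x^l dμ(x) = (k/n) · C(n, l+1) / C(k, l+1) for every l = 0, 1, ..., k − 1. -/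
open MeasureTheory intervalIntegral
open scoped ENNReal NNReal

lemma betaInt : ∀ (q p : ℕ), ∫ x in (0:ℝ)..1, x^p * (1-x)^q
    = (p.factorial * q.factorial : ℝ) / (p+q+1).factorial := by
  intro q
  induction q with
  | zero =>
    intro p; simp [integral_pow, Nat.factorial_succ]
    rw [eq_div_iff (by positivity)]; field_simp
  | succ q ih =>
    intro p
    have hu : ∀ x ∈ Set.uIcc (0:ℝ) 1, HasDerivAt (fun x : ℝ => (1-x)^(q+1))
        (-((q+1) * (1-x)^q)) x := by
      intro x _
      have h1 : HasDerivAt (fun x : ℝ => 1 - x) (-1) x := by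
        simpa using (hasDerivAt_id x).const_sub (1:ℝ)
      have := (h1.pow (q+1))
      refine this.congr_deriv ?_
      rw [Nat.add_sub_cancel]; push_cast; ring
    have hv : ∀ x ∈ Set.uIcc (0:ℝ) 1, HasDerivAt (fun x : ℝ => x^(p+1)/(p+1))
        (x^p) x := by
      intro x _
      have := (hasDerivAt_pow (p+1) x).div_const (p+1)
      refine this.congr_deriv ?_
      rw [Nat.add_sub_cancel]; push_cast; field_simp
    have hint1 : IntervalIntegrable (fun x : ℝ => -((q+1) * (1-x)^q)) volume 0 1 :=
      (by continuity : Continuous fun x : ℝ => -((q+1:ℝ) * (1-x)^q)).intervalIntegrable _ _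
    have hint2 : IntervalIntegrable (fun x : ℝ => x^p) volume 0 1 :=
      (by continuity : Continuous fun x : ℝ => x^p).intervalIntegrable _ _
    have ibp := intervalIntegral.integral_mul_deriv_eq_deriv_mul hu hv hint1 hint2
    have key : ∫ x in (0:ℝ)..1, (1-x)^(q+1) * x^p
        = ((q+1:ℝ)/(p+1)) * ∫ x in (0:ℝ)..1, x^(p+1) * (1-x)^q := by
      rw [ibp]
      have heq : ∀ x:ℝ, -((q+1:ℝ) * (1-x)^q) * (x^(p+1)/(p+1))
          = -(((q+1:ℝ)/(p+1)) * (x^(p+1)*(1-x)^q)) := by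
        intro x; ring
      simp only [heq, intervalIntegral.integral_neg, intervalIntegral.integral_const_mul]
      norm_num
    have := ih (p+1)
    calc ∫ x in (0:ℝ)..1, x^p * (1-x)^(q+1)
        = ∫ x in (0:ℝ)..1, (1-x)^(q+1) * x^p := by congr 1; funext x; ring
      _ = ((q+1:ℝ)/(p+1)) * ∫ x in (0:ℝ)..1, x^(p+1) * (1-x)^q := key
      _ = ((q+1:ℝ)/(p+1)) * ((p+1).factorial * q.factorial / (p+1+q+1).factorial) := by rw [this]
      _ = (p.factorial * (q+1).factorial : ℝ) / (p+(q+1)+1).factorial := by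
          have h1 : ((p+1).factorial : ℝ) = (p+1) * p.factorial := by
            rw [Nat.factorial_succ]; push_cast; ring
          have h2 : ((q+1).factorial : ℝ) = (q+1) * q.factorial := by
            rw [Nat.factorial_succ]; push_cast; ring
          have h3 : (p+1+q+1) = (p+(q+1)+1) := by ring
          rw [h1, h2, h3]
          have : ((p+(q+1)+1).factorial : ℝ) ≠ 0 := by positivity
          field_simp

/-- Existence of a probability measure (a pushforward of a Beta(a+1,b+1) law under `x ↦ x⁻¹`)
with moments `(a+b+1)! (a-l)! / (a! (a+b+1-l)!)` for `l ≤ a`. -/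
lemma beta_measure_exists (a b : ℕ) :
    ∃ μ : Measure ℝ, IsProbabilityMeasure μ ∧ (∀ᵐ x ∂μ, 0 ≤ x) ∧
      ∀ l : ℕ, l ≤ a → ∫ x, x^l ∂μ =
        ((a+b+1).factorial * (a-l).factorial : ℝ) / (a.factorial * (a+b+1-l).factorial) := by
  have hfac : ∀ m : ℕ, (0:ℝ) < m.factorial := fun m => by exact_mod_cast m.factorial_pos
  set C : ℝ := (a+b+1).factorial / (a.factorial * b.factorial) with hC
  have hCpos : 0 < C := div_pos (hfac _) (mul_pos (hfac _) (hfac _))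
  set dens : ℝ → ℝ := Set.indicator (Set.Ioc (0:ℝ) 1) (fun x => C * (x^a * (1-x)^b)) with hdens
  have cont : Continuous fun x : ℝ => C * (x^a * (1-x)^b) := by continuity
  have meas_dens : Measurable dens := cont.measurable.indicator measurableSet_Ioc
  have dens_nonneg : ∀ x, 0 ≤ dens x := by
    intro x
    apply Set.indicator_nonneg
    intro y hy
    have h1 : (0:ℝ) ≤ y := hy.1.le
    have h2 : (0:ℝ) ≤ 1 - y := by linarith [hy.2]
    positivity
  have int_dens : Integrable dens := by
    have h1 : IntegrableOn (fun x : ℝ => C * (x^a * (1-x)^b)) (Set.Ioc (0:ℝ) 1) :=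
      (cont.integrableOn_Icc (a := 0) (b := 1)).mono_set Set.Ioc_subset_Icc_self
    exact h1.integrable_indicator measurableSet_Ioc
  -- The key integral computation
  have intval : ∀ l : ℕ, l ≤ a → ∫ x, dens x * (x⁻¹)^l
      = C * ((a-l).factorial * b.factorial / ((a-l)+b+1).factorial) := by
    intro l hl
    have e1 : (fun x => dens x * (x⁻¹)^l)
        = Set.indicator (Set.Ioc (0:ℝ) 1) (fun x => (C * (x^a * (1-x)^b)) * (x⁻¹)^l) := by
      funext x
      by_cases hx : x ∈ Set.Ioc (0:ℝ) 1
      · simp [hdens, Set.indicator_of_mem hx]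
      · simp [hdens, Set.indicator_of_notMem hx]
    rw [e1, MeasureTheory.integral_indicator measurableSet_Ioc]
    have e2 : Set.EqOn (fun x : ℝ => (C * (x^a * (1-x)^b)) * (x⁻¹)^l)
        (fun x : ℝ => C * (x^(a-l) * (1-x)^b)) (Set.Ioc (0:ℝ) 1) := by
      intro x hx
      have hx0 : x ≠ 0 := ne_of_gt hx.1
      have hxp : x^(a-l) * x^l = x^a := pow_sub_mul_pow x hl
      have hxl : (x:ℝ)^l ≠ 0 := pow_ne_zero _ hx0
      simp only
      rw [← hxp, inv_pow]
      field_simp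
    rw [setIntegral_congr_fun measurableSet_Ioc e2]
    rw [← intervalIntegral.integral_of_le zero_le_one]
    rw [intervalIntegral.integral_const_mul]
    rw [betaInt b (a-l)]
  have total : ∫ x, dens x = 1 := by
    have h0 := intval 0 (Nat.zero_le a)
    simp only [pow_zero, mul_one, Nat.sub_zero] at h0
    rw [h0, hC]
    field_simp
  -- the measures
  set μ0 : Measure ℝ := volume.withDensity (fun x => ((dens x).toNNReal : ℝ≥0∞)) with hμ0
  have prob0 : IsProbabilityMeasure μ0 := by
    constructor
    rw [hμ0, withDensity_apply _ MeasurableSet.univ, Measure.restrict_univ]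
    have he : ∀ x, ((dens x).toNNReal : ℝ≥0∞) = ENNReal.ofReal (dens x) := fun x => rfl
    simp only [he]
    rw [← ofReal_integral_eq_lintegral_ofReal int_dens (ae_of_all _ dens_nonneg), total]
    exact ENNReal.ofReal_one
  have hsupp : ∀ᵐ x ∂μ0, x ∈ Set.Ioc (0:ℝ) 1 := by
    rw [ae_iff]
    have hset : {x : ℝ | ¬ x ∈ Set.Ioc (0:ℝ) 1} = (Set.Ioc (0:ℝ) 1)ᶜ := rfl
    rw [hset, hμ0, withDensity_apply _ measurableSet_Ioc.compl]
    have : ∀ x ∈ (Set.Ioc (0:ℝ) 1)ᶜ, ((dens x).toNNReal : ℝ≥0∞) = 0 := by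
      intro x hx
      have hx' : x ∉ Set.Ioc (0:ℝ) 1 := hx
      rw [hdens, Set.indicator_of_notMem hx']
      simp
    calc ∫⁻ x in (Set.Ioc (0:ℝ) 1)ᶜ, ((dens x).toNNReal : ℝ≥0∞)
        = ∫⁻ _ in (Set.Ioc (0:ℝ) 1)ᶜ, 0 :=
          setLIntegral_congr_fun measurableSet_Ioc.compl this
      _ = 0 := by simp
  refine ⟨μ0.map (fun x => x⁻¹), Measure.isProbabilityMeasure_map measurable_inv.aemeasurable, ?_, ?_⟩
  · rw [MeasureTheory.ae_map_iff measurable_inv.aemeasurable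
      (measurableSet_Ici : MeasurableSet (Set.Ici (0:ℝ)))]
    filter_upwards [hsupp] with x hx
    exact Set.mem_Ici.mpr (inv_nonneg.mpr hx.1.le)
  · intro l hl
    have hgm : AEStronglyMeasurable (fun x : ℝ => x ^ l) (μ0.map (fun x : ℝ => x⁻¹)) :=
      ((measurable_id.pow_const l : Measurable fun x : ℝ => x ^ l)).aestronglyMeasurable
    rw [integral_map (φ := fun x : ℝ => x⁻¹) measurable_inv.aemeasurable hgm]
    rw [hμ0, integral_withDensity_eq_integral_smul meas_dens.real_toNNReal]
    have he : (fun x => (dens x).toNNReal • (x⁻¹)^l) = fun x => dens x * (x⁻¹)^l := by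
      funext x
      rw [NNReal.smul_def, Real.coe_toNNReal _ (dens_nonneg x), smul_eq_mul]
    rw [he, intval l hl]
    have h3 : (a-l)+b+1 = a+b+1-l := by omega
    rw [h3, hC]
    have h4 := hfac (a+b+1-l)
    have h5 := hfac (a-l)
    have h6 := hfac a
    have h7 := hfac b
    have h8 := hfac (a+b+1)
    field_simp

/-- Rewriting the prescribed moment in terms of factorials. -/
lemma rhs_eq (k n l : ℕ) (hk : 0 < k) (hl : l + 1 ≤ k) (hkn : k ≤ n) :
    ((k:ℝ)/n) * (n.choose (l+1)) / (k.choose (l+1))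
      = ((n-1).factorial * (k-1-l).factorial : ℝ) / ((k-1).factorial * (n-1-l).factorial) := by
  have hn : 0 < n := lt_of_lt_of_le hk hkn
  have hfac : ∀ m : ℕ, (0:ℝ) < m.factorial := fun m => by exact_mod_cast m.factorial_pos
  have hln : l + 1 ≤ n := le_trans hl hkn
  rw [Nat.cast_choose ℝ hl, Nat.cast_choose ℝ hln]
  have e1 : n - (l+1) = n - 1 - l := by omega
  have e2 : k - (l+1) = k - 1 - l := by omega
  rw [e1, e2]
  have hnf : (n.factorial : ℝ) = n * (n-1).factorial := by
    rw [← Nat.mul_factorial_pred hn.ne']; push_cast; ring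
  have hkf : (k.factorial : ℝ) = k * (k-1).factorial := by
    rw [← Nat.mul_factorial_pred hk.ne']; push_cast; ring
  rw [hnf, hkf]
  have h1 := hfac (l+1)
  have h2 := hfac (n-1-l)
  have h3 := hfac (k-1-l)
  have h4 := hfac (n-1)
  have h5 := hfac (k-1)
  have hn0 : (n:ℝ) ≠ 0 := by positivity
  have hk0 : (k:ℝ) ≠ 0 := by positivity
  field_simp

/-- Solvability of the truncated Stieltjes moment problem with the
prescribed moments μ_l = (k/n)·C(n,l+1)/C(k,l+1), l = 0, …, k−1. -/
theorem stmt3 (k n : ℕ) (hk : 0 < k) (hn : 0 < n) (hodd : Odd k) (hdvd : k ∣ n) :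
    ∃ μ : Measure ℝ, IsProbabilityMeasure μ ∧
      (∀ᵐ x ∂μ, 0 ≤ x) ∧
      ∀ l : ℕ, l ≤ k - 1 →
        ∫ x, x ^ l ∂μ =
          ((k : ℝ) / n) * (n.choose (l + 1)) / (k.choose (l + 1)) := by
  have hkn : k ≤ n := Nat.le_of_dvd hn hdvd
  rcases eq_or_lt_of_le hkn with heq | hlt
  · -- n = k : use the Dirac measure at 1
    subst heq
    refine ⟨Measure.dirac 1, inferInstance, ?_, ?_⟩
    · rw [MeasureTheory.ae_dirac_eq]
      exact Filter.eventually_pure.mpr zero_le_one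
    · intro l hl
      rw [integral_dirac]
      have hc : (0:ℝ) < k.choose (l+1) := by
        exact_mod_cast Nat.choose_pos (by omega : l + 1 ≤ k)
      have hk0 : (0:ℝ) < (k:ℝ) := by exact_mod_cast hk
      simp only [one_pow]
      field_simp
  · obtain ⟨μ, hprob, hae, hmom⟩ := beta_measure_exists (k-1) (n-k-1)
    refine ⟨μ, hprob, hae, ?_⟩
    intro l hl
    have hl1 : l + 1 ≤ k := by omega
    rw [rhs_eq k n l hk hl1 hkn]
    have e2 : k - 1 + (n - k - 1) + 1 - l = n - 1 - l := by omega
    have e1 : k - 1 + (n - k - 1) + 1 = n - 1 := by omega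
    rw [hmom l hl, e2, e1]
end

section
/- Let k and n be integers with k odd, 1 ≤ k < n, and set m = (k−1)/2. Define μ_l = (k/n) · C(n, l+1) / C(k, l+1) for l = 0, 1, ..., k − 1. Then the (m+1)×(m+1) Hankel matrix H with entries H_{ij} = μ_{i+j} for 0 ≤ i, j ≤ m is positive definite. -/
open MeasureTheory Polynomial Set Nat Matrix

noncomputable def Ibeta (a b : ℕ) : ℝ := ∫ x in (0:ℝ)..1, x ^ a * (1 - x) ^ b

lemma Ibeta_cont (a b : ℕ) : Continuous fun x : ℝ => x ^ a * (1 - x) ^ b := by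
  continuity

lemma Ibeta_val : ∀ b a : ℕ, Ibeta a b = (a)! * (b)! / ((a + b + 1)!) := by
  intro b
  induction b with
  | zero =>
    intro a
    have : Ibeta a 0 = ∫ x in (0:ℝ)..1, x ^ a := by
      unfold Ibeta; congr 1; funext x; simp
    rw [this, integral_pow]
    have h1 : ((a:ℝ) + 1) ≠ 0 := by positivity
    have h2 : ((a + 0 + 1)! : ℝ) = (a + 1) * (a)! := by
      rw [Nat.add_zero, Nat.factorial_succ]; push_cast; ring
    rw [h2]
    have h3 : ((a)! : ℝ) ≠ 0 := by positivity
    field_simp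
    simp
  | succ b ih =>
    intro a
    have key : Ibeta a b = Ibeta a (b + 1) + Ibeta (a + 1) b := by
      unfold Ibeta
      rw [← intervalIntegral.integral_add ((Ibeta_cont a (b+1)).intervalIntegrable _ _)
        ((Ibeta_cont (a+1) b).intervalIntegrable _ _)]
      congr 1; funext x; ring
    have h1 : Ibeta a (b + 1) = Ibeta a b - Ibeta (a + 1) b := by linarith
    rw [h1, ih, ih]
    have e1 : ((a + (b+1) + 1)! : ℝ) = (a + b + 2) * (a + b + 1)! := by
      have : a + (b+1) + 1 = (a + b + 1) + 1 := by ring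
      rw [this, Nat.factorial_succ]; push_cast; ring
    have e2 : ((a + 1 + b + 1)! : ℝ) = (a + b + 2) * (a + b + 1)! := by
      have : a + 1 + b + 1 = (a + b + 1) + 1 := by ring
      rw [this, Nat.factorial_succ]; push_cast; ring
    have e3 : (((b+1))! : ℝ) = (b + 1) * (b)! := by
      rw [Nat.factorial_succ]; push_cast; ring
    have e4 : (((a+1))! : ℝ) = (a + 1) * (a)! := by
      rw [Nat.factorial_succ]; push_cast; ring
    rw [e1, e2, e3, e4]
    have h2 : ((a + b + 1)! : ℝ) ≠ 0 := by positivity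
    have h3 : ((a:ℝ) + b + 2) ≠ 0 := by positivity
    field_simp
    ring

lemma Ibeta_pos (a b : ℕ) : 0 < Ibeta a b := by
  rw [Ibeta_val]
  apply _root_.div_pos
  · exact mul_pos (Nat.cast_pos.mpr (Nat.factorial_pos _)) (Nat.cast_pos.mpr (Nat.factorial_pos _))
  · exact Nat.cast_pos.mpr (Nat.factorial_pos _)

/-- The (m+1)×(m+1) Hankel matrix of the moments
μ_l = (k/n)·C(n,l+1)/C(k,l+1) is positive definite, where m = (k−1)/2. -/
theorem stmt4 (k n : ℕ) (hodd : Odd k) (hk : 1 ≤ k) (hkn : k < n)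
    (m : ℕ) (hm : m = (k - 1) / 2)
    (μ : ℕ → ℝ)
    (hμ : ∀ l : ℕ, l ≤ k - 1 →
      μ l = ((k : ℝ) / n) * (n.choose (l + 1)) / (k.choose (l + 1))) :
    (Matrix.of fun i j : Fin (m + 1) => μ ((i : ℕ) + (j : ℕ))).PosDef := by
  obtain ⟨mm, hmm⟩ := hodd
  have hkm : k = 2 * m + 1 := by omega
  set b : ℕ := n - k - 1 with hb
  have hn : n = 2 * m + b + 2 := by omega
  -- key identity: μ l * Ibeta (2m) b = Ibeta (2m - l) b for l ≤ 2m
  have key : ∀ l : ℕ, l ≤ 2 * m → μ l * Ibeta (2 * m) b = Ibeta (2 * m - l) b := by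
    intro l hl
    rw [hμ l (by omega), Ibeta_val, Ibeta_val]
    have hads : 2 * m - l + b + 1 = 2 * m + b + 1 - l := by omega
    have hc1 : ((n.choose (l+1) : ℝ)) = (n)! / ((l+1)! * ((2*m+b+1-l))!) := by
      rw [Nat.cast_choose ℝ (by omega : l + 1 ≤ n),
        show n - (l + 1) = 2 * m + b + 1 - l from by omega]
    have hc2 : ((k.choose (l+1) : ℝ)) = (k)! / ((l+1)! * ((2*m-l))!) := by
      rw [Nat.cast_choose ℝ (by omega : l + 1 ≤ k),
        show k - (l + 1) = 2 * m - l from by omega]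
    have hnf : ((n)! : ℝ) = n * ((2*m+b+1))! := by
      have : n = (2*m+b+1) + 1 := by omega
      rw [this, Nat.factorial_succ]; push_cast; ring
    have hkf : ((k)! : ℝ) = k * ((2*m))! := by
      have : k = (2*m) + 1 := by omega
      rw [this, Nat.factorial_succ]; push_cast; ring
    rw [hads, hc1, hc2, hnf, hkf]
    have z1 : ((l+1)! : ℝ) ≠ 0 := by positivity
    have z2 : (((2*m+b+1-l))! : ℝ) ≠ 0 := by positivity
    have z3 : (((2*m-l))! : ℝ) ≠ 0 := by positivity
    have z4 : (((2*m))! : ℝ) ≠ 0 := by positivity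
    have z5 : (((2*m+b+1))! : ℝ) ≠ 0 := by positivity
    have z6 : ((b)! : ℝ) ≠ 0 := by positivity
    have z7 : ((2*m+b+1)! : ℝ) = ((2*m+b+1))! := rfl
    have zk : (k : ℝ) ≠ 0 := Nat.cast_ne_zero.mpr (by omega)
    have zn : (n : ℝ) ≠ 0 := Nat.cast_ne_zero.mpr (by omega)
    have e1 : ((2*m+b+1)! : ℝ) ≠ 0 := by positivity
    have e2 : ((2*m-l+b+1)! : ℝ) ≠ 0 := by positivity
    field_simp
  refine Matrix.posDef_iff_dotProduct_mulVec.mpr ⟨?_, ?_⟩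
  · -- Hermitian
    ext i j
    simp only [Matrix.conjTranspose_apply, Matrix.of_apply, star_trivial]
    rw [Nat.add_comm]
  · intro v hv
    -- the polynomial
    set p : ℝ[X] := ∑ i : Fin (m + 1), C (v i) * X ^ (m - (i : ℕ)) with hp
    have hpe : ∀ x : ℝ, p.eval x = ∑ i : Fin (m + 1), v i * x ^ (m - (i : ℕ)) := by
      intro x; rw [hp]; simp [eval_finset_sum]
    have hpne : p ≠ 0 := by
      obtain ⟨i₀, hi₀⟩ := Function.ne_iff.mp hv
      intro h0
      apply hi₀
      have := congrArg (fun q => Polynomial.coeff q (m - (i₀ : ℕ))) h0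
      simp only [hp, Polynomial.finset_sum_coeff, Polynomial.coeff_C_mul,
        Polynomial.coeff_X_pow, Polynomial.coeff_zero] at this
      rw [Finset.sum_eq_single i₀] at this
      · simpa using this
      · intro i _ hii
        have h1 : (i : ℕ) ≤ m := by omega
        have h2 : (i₀ : ℕ) ≤ m := by omega
        have hne : ¬ (m - (i₀ : ℕ) = m - (i : ℕ)) := by
          intro he
          apply hii
          apply Fin.ext
          omega
        simp [hne]
      · simp
    -- quadratic form
    have hQ : (dotProduct (star v) ((Matrix.of fun i j : Fin (m + 1) => μ ((i : ℕ) + (j : ℕ))) *ᵥ v))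
        * Ibeta (2 * m) b = ∫ x in (0:ℝ)..1, (p.eval x) ^ 2 * (1 - x) ^ b := by
      simp only [star_trivial, dotProduct, Matrix.mulVec, dotProduct, Matrix.of_apply]
      rw [Finset.sum_mul]
      have step : ∀ i : Fin (m + 1),
          v i * (∑ j : Fin (m+1), μ ((i:ℕ) + (j:ℕ)) * v j) * Ibeta (2 * m) b
          = ∫ x in (0:ℝ)..1, (v i * x ^ (m - (i:ℕ))) *
              ((∑ j : Fin (m+1), v j * x ^ (m - (j:ℕ))) * (1 - x) ^ b) := by
        intro i
        have : ∀ j : Fin (m+1),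
            v i * (μ ((i:ℕ) + (j:ℕ)) * v j) * Ibeta (2 * m) b
            = ∫ x in (0:ℝ)..1, (v i * x ^ (m - (i:ℕ))) *
                ((v j * x ^ (m - (j:ℕ))) * (1 - x) ^ b) := by
          intro j
          have hij : (i:ℕ) + (j:ℕ) ≤ 2 * m := by omega
          have hK := key ((i:ℕ) + (j:ℕ)) hij
          have hsplit : 2 * m - ((i:ℕ) + (j:ℕ)) = (m - (i:ℕ)) + (m - (j:ℕ)) := by omega
          calc v i * (μ ((i:ℕ) + (j:ℕ)) * v j) * Ibeta (2 * m) b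
              = v i * v j * (μ ((i:ℕ) + (j:ℕ)) * Ibeta (2 * m) b) := by ring
            _ = v i * v j * Ibeta ((m - (i:ℕ)) + (m - (j:ℕ))) b := by rw [hK, hsplit]
            _ = ∫ x in (0:ℝ)..1, (v i * x ^ (m - (i:ℕ))) *
                ((v j * x ^ (m - (j:ℕ))) * (1 - x) ^ b) := by
                rw [Ibeta, ← intervalIntegral.integral_const_mul]
                congr 1; funext x; rw [pow_add]; ring
        calc v i * (∑ j : Fin (m+1), μ ((i:ℕ) + (j:ℕ)) * v j) * Ibeta (2 * m) b
            = ∑ j : Fin (m+1), v i * (μ ((i:ℕ) + (j:ℕ)) * v j) * Ibeta (2 * m) b := by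
              rw [Finset.mul_sum, Finset.sum_mul]
          _ = ∑ j : Fin (m+1), ∫ x in (0:ℝ)..1, (v i * x ^ (m - (i:ℕ))) *
                ((v j * x ^ (m - (j:ℕ))) * (1 - x) ^ b) := by
              exact Finset.sum_congr rfl fun j _ => this j
          _ = ∫ x in (0:ℝ)..1, ∑ j : Fin (m+1), (v i * x ^ (m - (i:ℕ))) *
                ((v j * x ^ (m - (j:ℕ))) * (1 - x) ^ b) := by
              rw [intervalIntegral.integral_finset_sum]
              intro j _
              exact ((continuous_const.mul (continuous_pow _)).mul
                ((continuous_const.mul (continuous_pow _)).mul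
                  ((continuous_const.sub continuous_id).pow b))).intervalIntegrable _ _
          _ = ∫ x in (0:ℝ)..1, (v i * x ^ (m - (i:ℕ))) *
                ((∑ j : Fin (m+1), v j * x ^ (m - (j:ℕ))) * (1 - x) ^ b) := by
              congr 1; funext x
              rw [Finset.sum_mul, Finset.mul_sum]
      calc (∑ i : Fin (m+1), v i * (∑ j : Fin (m+1), μ ((i:ℕ) + (j:ℕ)) * v j) * Ibeta (2 * m) b)
          = ∑ i : Fin (m+1), ∫ x in (0:ℝ)..1, (v i * x ^ (m - (i:ℕ))) *
              ((∑ j : Fin (m+1), v j * x ^ (m - (j:ℕ))) * (1 - x) ^ b) := by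
            exact Finset.sum_congr rfl fun i _ => step i
        _ = ∫ x in (0:ℝ)..1, ∑ i : Fin (m+1), (v i * x ^ (m - (i:ℕ))) *
              ((∑ j : Fin (m+1), v j * x ^ (m - (j:ℕ))) * (1 - x) ^ b) := by
            rw [intervalIntegral.integral_finset_sum]
            intro i _
            exact ((continuous_const.mul (continuous_pow _)).mul
              ((continuous_finset_sum _ fun j _ => continuous_const.mul (continuous_pow _)).mul
                ((continuous_const.sub continuous_id).pow b))).intervalIntegrable _ _
        _ = ∫ x in (0:ℝ)..1, (p.eval x) ^ 2 * (1 - x) ^ b := by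
            congr 1; funext x
            rw [← Finset.sum_mul, hpe x]
            ring
    -- positivity of the integral
    have hcont : Continuous fun x : ℝ => (p.eval x) ^ 2 * (1 - x) ^ b :=
      (p.continuous.pow 2).mul ((continuous_const.sub continuous_id).pow b)
    have hae : 0 ≤ᵐ[volume.restrict (Set.uIoc (0:ℝ) 1)]
        fun x : ℝ => (p.eval x) ^ 2 * (1 - x) ^ b := by
      filter_upwards [ae_restrict_mem measurableSet_uIoc] with x hx
      rw [Set.uIoc_of_le (by norm_num : (0:ℝ) ≤ 1)] at hx
      have h1 : (0:ℝ) ≤ 1 - x := by linarith [hx.2]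
      positivity
    have hpos : 0 < ∫ x in (0:ℝ)..1, (p.eval x) ^ 2 * (1 - x) ^ b := by
      rw [intervalIntegral.integral_pos_iff_support_of_nonneg_ae' hae
        (hcont.intervalIntegrable _ _)]
      constructor
      · norm_num
      · -- measure of support positive
        have hroots : (volume {x : ℝ | p.IsRoot x}) = 0 :=
          (Polynomial.finite_setOf_isRoot hpne).measure_zero _
        have hsub : Ioo (0:ℝ) 1 \ {x : ℝ | p.IsRoot x} ⊆
            Function.support (fun x : ℝ => (p.eval x) ^ 2 * (1 - x) ^ b) ∩ Ioc 0 1 := by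
          rintro x ⟨hx, hxr⟩
          refine ⟨?_, hx.1, hx.2.le⟩
          have h1 : p.eval x ≠ 0 := hxr
          have h0 : (0:ℝ) < 1 - x := by linarith [hx.2]
          have h2 : (1 - x) ^ b ≠ 0 := pow_ne_zero _ (ne_of_gt h0)
          exact mul_ne_zero (pow_ne_zero _ h1) h2
        calc (0:ENNReal) < volume (Ioo (0:ℝ) 1 \ {x : ℝ | p.IsRoot x}) := by
              rw [measure_diff_null hroots]
              simp [Real.volume_Ioo]
          _ ≤ _ := measure_mono hsub
    have hIpos := Ibeta_pos (2 * m) b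
    nlinarith [hQ, hpos, hIpos]
end

section
/- Let k ≥ 1 and let b_1, ..., b_k be pairwise distinct real numbers. Define μ_l = (1/k) · ∑_{i=1}^k b_i^l for every integer l ≥ 0. Let Q(x) be the determinant of the (k+1)×(k+1) matrix whose row p, for p = 0, 1, ..., k−1, is (μ_p, μ_{p+1}, ..., μ_{p+k}), and whose last row is (1, x, x^2, ..., x^k). Then Q(b_i) = 0 for every i = 1, ..., k. -/
open Finset

/-- The moments of the discrete uniform distribution on `b 1, …, b k`. -/
noncomputable def empMoment (k : ℕ) (b : Fin k → ℝ) (l : ℕ) : ℝ :=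
  (∑ i, b i ^ l) / k

/-- The polynomial `Q(x)`: the determinant of the (k+1)×(k+1) matrix whose
row `p`, for `p = 0, …, k−1`, is `(μ_p, μ_{p+1}, …, μ_{p+k})`, and whose last
row is `(1, x, x², …, x^k)`. -/
noncomputable def QPoly (k : ℕ) (b : Fin k → ℝ) (x : ℝ) : ℝ :=
  Matrix.det (Matrix.of fun p q : Fin (k + 1) =>
    if (p : ℕ) < k then empMoment k b ((p : ℕ) + (q : ℕ)) else x ^ (q : ℕ))

/-- Each `b i` is a root of `Q`. -/
theorem stmt8 (k : ℕ) (hk : 1 ≤ k) (b : Fin k → ℝ) (hb : Function.Injective b) :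
    ∀ i : Fin k, QPoly k b (b i) = 0 := by
  intro i
  classical
  set F := (Matrix.detRowAlternating : ((Fin (k+1)) → ℝ) [⋀^Fin (k+1)]→ₗ[ℝ] ℝ) with hF
  set v : Fin k → (Fin (k+1) → ℝ) := fun j q => b j ^ (q : ℕ) with hv
  set A : Fin (k+1) → Finset (Fin k) := fun p => if (p : ℕ) < k then univ else {i} with hA
  set c : Fin (k+1) → Fin k → ℝ := fun p j => if (p : ℕ) < k then b j ^ (p : ℕ) / k else 1
    with hc
  have hrow : (fun p q : Fin (k+1) =>
      if (p : ℕ) < k then empMoment k b ((p : ℕ) + (q : ℕ)) else b i ^ (q : ℕ))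
      = fun p => ∑ j ∈ A p, c p j • v j := by
    funext p q
    by_cases hp : (p : ℕ) < k
    · simp only [hp, if_true, hA, hc, hv, if_true]
      simp [empMoment, Finset.sum_apply, Finset.sum_div, pow_add, div_mul_eq_mul_div,
        mul_comm, mul_div_assoc]
      exact Finset.sum_congr rfl fun x _ => by ring
    · simp [hp, hA, hc, hv]
  have : QPoly k b (b i) = F (fun p => ∑ j ∈ A p, c p j • v j) := by
    rw [QPoly, ← hrow]; rfl
  rw [this,
    show (F fun p => ∑ j ∈ A p, c p j • v j)
      = (F : MultilinearMap ℝ (fun _ : Fin (k+1) => Fin (k+1) → ℝ) ℝ)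
        (fun p => ∑ j ∈ A p, c p j • v j) from rfl,
    MultilinearMap.map_sum_finset]
  apply Finset.sum_eq_zero
  intro r _
  rw [MultilinearMap.map_smul_univ]
  obtain ⟨p, p', hne, heq⟩ : ∃ p p', p ≠ p' ∧ r p = r p' := by
    obtain ⟨p, p', hne, heq⟩ := Fintype.exists_ne_map_eq_of_card_lt r (by simp)
    exact ⟨p, p', hne, heq⟩
  have : F (fun p => v (r p)) = 0 := F.map_eq_zero_of_eq _ (by rw [heq]) hne
  have h2 : ((F : MultilinearMap ℝ (fun _ : Fin (k+1) => Fin (k+1) → ℝ) ℝ) fun j => v (r j)) = 0 := this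
  rw [h2, smul_zero]
end

section
/- Let k ≥ 1 and let b_1, ..., b_k be pairwise distinct real numbers. Define μ_l = (1/k) · ∑_{i=1}^k b_i^l for every integer l ≥ 0, and for 0 ≤ j ≤ k−1 let D_j be the determinant of the (j+1)×(j+1) Hankel matrix (μ_{p+q})_{0 ≤ p,q ≤ j} (each D_j is positive). Define P_0 = 1 and, for 1 ≤ j ≤ k−1, P_j(x) = (D_{j−1} D_j)^{−1/2} times the determinant of the (j+1)×(j+1) matrix whose row p, for p = 0, ..., j−1, is (μ_p, μ_{p+1}, ..., μ_{p+j}), and whose last row is (1, x, ..., x^j). Then for every l = 1, ..., k one has ∑_{i=0}^{k−1} P_i(b_l)^2 = k. -/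
open Finset

/-- `D j` : determinant of the (j+1)×(j+1) Hankel matrix `(μ_{p+q})_{0 ≤ p,q ≤ j}`. -/
noncomputable def hankelDet (k : ℕ) (b : Fin k → ℝ) (j : ℕ) : ℝ :=
  Matrix.det (Matrix.of fun p q : Fin (j + 1) => empMoment k b ((p : ℕ) + (q : ℕ)))

/-- The orthonormal polynomial `P j`, defined by the Hankel-determinant formula:
`P 0 = 1`, and for `j ≥ 1`, `P j (x) = (D_{j−1} D_j)^{−1/2}` times the determinant of
the (j+1)×(j+1) matrix whose rows `p = 0, …, j−1` are `(μ_p, …, μ_{p+j})` and whose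
last row is `(1, x, …, x^j)`. -/
noncomputable def orthoPoly (k : ℕ) (b : Fin k → ℝ) (j : ℕ) (x : ℝ) : ℝ :=
  if j = 0 then 1
  else (Real.sqrt (hankelDet k b (j - 1) * hankelDet k b j))⁻¹ *
    Matrix.det (Matrix.of fun p q : Fin (j + 1) =>
      if (p : ℕ) < j then empMoment k b ((p : ℕ) + (q : ℕ)) else x ^ (q : ℕ))

/-! ### Auxiliary machinery -/

open scoped Matrix

/-- The matrix with Hankel moment rows `0,…,j-1` and prescribed last row `r`. -/
noncomputable def mrow (k : ℕ) (b : Fin k → ℝ) (j : ℕ) (r : Fin (j + 1) → ℝ) :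
    Matrix (Fin (j + 1)) (Fin (j + 1)) ℝ :=
  Matrix.of fun p q => if (p : ℕ) < j then empMoment k b ((p : ℕ) + (q : ℕ)) else r q

/-- The unnormalized orthogonal polynomial. -/
noncomputable def qPoly (k : ℕ) (b : Fin k → ℝ) (j : ℕ) (x : ℝ) : ℝ :=
  (mrow k b j fun q => x ^ (q : ℕ)).det

lemma mrow_eq_updateRow (k : ℕ) (b : Fin k → ℝ) (j : ℕ) (r r' : Fin (j + 1) → ℝ) :
    mrow k b j r = (mrow k b j r').updateRow (Fin.last j) r := by
  ext p q
  rcases eq_or_ne p (Fin.last j) with h | h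
  · subst h
    simp [mrow, Matrix.updateRow_self]
  · have hp : (p : ℕ) < j := Fin.val_lt_last h
    simp [mrow, Matrix.updateRow_ne h, hp]

lemma det_updateRow_finset_sum {n : Type*} [DecidableEq n] [Fintype n] {ι : Type*}
    (M : Matrix n n ℝ) (j : n) (s : Finset ι) (u : ι → n → ℝ) :
    (M.updateRow j (∑ i ∈ s, u i)).det = ∑ i ∈ s, (M.updateRow j (u i)).det := by
  classical
  induction s using Finset.induction with
  | empty =>
      simp only [Finset.sum_empty]
      exact Matrix.det_eq_zero_of_row_eq_zero j (by simp)
  | insert _ _ hnot ih =>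
      rw [Finset.sum_insert hnot, Matrix.det_updateRow_add, ih, Finset.sum_insert hnot]

/-- Multilinearity of the determinant in the last row. -/
lemma det_mrow_sum (k : ℕ) (b : Fin k → ℝ) (j : ℕ) {ι : Type*} (s : Finset ι)
    (c : ι → ℝ) (v : ι → Fin (j + 1) → ℝ) :
    ∑ i ∈ s, c i * (mrow k b j (v i)).det
      = (mrow k b j fun q => ∑ i ∈ s, c i * v i q).det := by
  classical
  have h0 : (fun q => ∑ i ∈ s, c i * v i q) = ∑ i ∈ s, c i • v i := by
    funext q; simp
  rw [h0, mrow_eq_updateRow k b j _ (fun _ => 0), det_updateRow_finset_sum]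
  refine Finset.sum_congr rfl fun i _ => ?_
  rw [Matrix.det_updateRow_smul, ← mrow_eq_updateRow]

/-- Averaging a power against the unnormalized polynomial yields a moment row. -/
lemma avg_pow_qPoly (k : ℕ) (b : Fin k → ℝ) (hk : 0 < k) (j m : ℕ) :
    (∑ l, b l ^ m * qPoly k b j (b l)) / k
      = (mrow k b j fun q => empMoment k b (m + (q : ℕ))).det := by
  have hk' : (k : ℝ) ≠ 0 := Nat.cast_ne_zero.mpr hk.ne'
  have h := det_mrow_sum k b j Finset.univ (fun l => b l ^ m / k)
    (fun l q => b l ^ (q : ℕ))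
  have h1 : (∑ l, b l ^ m * qPoly k b j (b l)) / k
      = ∑ l, b l ^ m / k * (mrow k b j fun q => b l ^ (q : ℕ)).det := by
    rw [Finset.sum_div]
    refine Finset.sum_congr rfl fun l _ => ?_
    rw [qPoly]; ring
  have h3 : (fun q : Fin (j + 1) => ∑ i, b i ^ m / k * b i ^ (q : ℕ))
      = fun q : Fin (j + 1) => empMoment k b (m + (q : ℕ)) := by
    funext q
    simp only [empMoment]
    rw [Finset.sum_div]
    refine Finset.sum_congr rfl fun l _ => ?_
    rw [pow_add]; ring
  rw [h1, h, h3]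

lemma det_mrow_moment_lt (k : ℕ) (b : Fin k → ℝ) (j m : ℕ) (h : m < j) :
    (mrow k b j fun q => empMoment k b (m + (q : ℕ))).det = 0 := by
  refine Matrix.det_zero_of_row_eq (i := ⟨m, by omega⟩) (j := Fin.last j) ?_ ?_
  · intro hc
    have := congrArg Fin.val hc
    simp only [Fin.val_last] at this
    omega
  · funext q
    simp [mrow, h]

lemma det_mrow_moment_eq (k : ℕ) (b : Fin k → ℝ) (j : ℕ) :
    (mrow k b j fun q => empMoment k b (j + (q : ℕ))).det = hankelDet k b j := by
  rw [hankelDet]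
  congr 1
  ext p q
  rcases lt_or_ge (p : ℕ) j with h | h
  · simp [mrow, h]
  · have hp : (p : ℕ) = j := by omega
    simp [mrow, hp]

lemma hankelDet_zero (k : ℕ) (b : Fin k → ℝ) (hk : 0 < k) : hankelDet k b 0 = 1 := by
  have hk' : (k : ℝ) ≠ 0 := Nat.cast_ne_zero.mpr hk.ne'
  rw [hankelDet, Matrix.det_fin_one]
  simp [empMoment, hk']

lemma qPoly_zero (k : ℕ) (b : Fin k → ℝ) (x : ℝ) : qPoly k b 0 x = 1 := by
  rw [qPoly, Matrix.det_fin_one]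
  simp [mrow]

/-- Uniform formula for `orthoPoly`, valid also at `j = 0`. -/
lemma orthoPoly_eq (k : ℕ) (b : Fin k → ℝ) (hk : 0 < k) (j : ℕ) (x : ℝ) :
    orthoPoly k b j x
      = (Real.sqrt (hankelDet k b (j - 1) * hankelDet k b j))⁻¹ * qPoly k b j x := by
  rcases Nat.eq_zero_or_pos j with h | h
  · subst h
    rw [orthoPoly, if_pos rfl, qPoly_zero, hankelDet_zero k b hk]
    norm_num
  · rw [orthoPoly, if_neg h.ne', qPoly, mrow]

/-! ### Positivity of the Hankel determinants -/

lemma hankel_posDef (k : ℕ) (b : Fin k → ℝ) (hb : Function.Injective b) (j : ℕ)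
    (hj : j < k) :
    (Matrix.of fun p q : Fin (j + 1) => empMoment k b ((p : ℕ) + (q : ℕ))).PosDef := by
  have hk : 0 < k := lt_of_le_of_lt (Nat.zero_le j) hj
  have hk' : (k : ℝ) ≠ 0 := Nat.cast_ne_zero.mpr hk.ne'
  set W : Matrix (Fin (j + 1)) (Fin k) ℝ := Matrix.of fun p i => b i ^ (p : ℕ) with hW
  have hM : (Matrix.of fun p q : Fin (j + 1) => empMoment k b ((p : ℕ) + (q : ℕ)))
      = (k : ℝ)⁻¹ • (W * W.transpose) := by
    ext p q
    simp only [Matrix.of_apply, Matrix.smul_apply, Matrix.mul_apply,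
      Matrix.transpose_apply, hW, smul_eq_mul, empMoment]
    rw [inv_mul_eq_div]
    congr 1
    exact Finset.sum_congr rfl fun i _ => (pow_add _ _ _)
  refine Matrix.posDef_iff_dotProduct_mulVec.mpr ⟨?_, ?_⟩
  · rw [hM]
    ext p q
    simp only [Matrix.conjTranspose_apply, Matrix.smul_apply, Matrix.mul_apply,
      Matrix.transpose_apply, star_trivial, smul_eq_mul]
    congr 1
    exact Finset.sum_congr rfl fun i _ => mul_comm _ _
  · intro x hx
    have key : star x ⬝ᵥ ((Matrix.of fun p q : Fin (j + 1) =>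
        empMoment k b ((p : ℕ) + (q : ℕ))) *ᵥ x)
        = (k : ℝ)⁻¹ * ((x ᵥ* W) ⬝ᵥ (x ᵥ* W)) := by
      rw [star_trivial, hM, Matrix.smul_mulVec, dotProduct_smul,
        smul_eq_mul]
      congr 1
      rw [Matrix.dotProduct_mulVec, ← Matrix.vecMul_vecMul, Matrix.vecMul_transpose,
        dotProduct_comm, Matrix.dotProduct_mulVec]
    rw [key]
    set z : Fin k → ℝ := x ᵥ* W with hzdef
    have hzval : ∀ i, z i = ∑ p, x p * b i ^ (p : ℕ) := by
      intro i
      simp [hzdef, Matrix.vecMul, dotProduct, hW]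
    -- `z ≠ 0`, else the polynomial `∑ x_p X^p` has `k > j` distinct roots
    have hzne : z ≠ 0 := by
      intro hz0
      apply hx
      set P : Polynomial ℝ :=
        ∑ p : Fin (j + 1), Polynomial.C (x p) * Polynomial.X ^ (p : ℕ) with hP
      have heval : ∀ i : Fin k, P.eval (b i) = 0 := by
        intro i
        have hzi : z i = 0 := congrFun hz0 i
        rw [hzval i] at hzi
        rw [hP, Polynomial.eval_finset_sum]
        rw [← hzi]
        exact Finset.sum_congr rfl fun p _ => by simp
      have hdeg : P.natDegree < Fintype.card (Fin k) := by
        rw [Fintype.card_fin]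
        have : P.natDegree ≤ j :=
          Polynomial.natDegree_sum_le_of_forall_le _ _ fun p _ =>
            le_trans (Polynomial.natDegree_C_mul_X_pow_le _ _) (by omega)
        omega
      have hP0 : P = 0 :=
        Polynomial.eq_zero_of_natDegree_lt_card_of_eval_eq_zero P hb heval hdeg
      funext p
      have hc : P.coeff (p : ℕ) = x p := by
        rw [hP, Polynomial.finset_sum_coeff]
        rw [Finset.sum_eq_single p]
        · simp
        · intro p' _ hp'
          rw [Polynomial.coeff_C_mul, Polynomial.coeff_X_pow,
            if_neg (by simpa [Fin.ext_iff, eq_comm] using hp'), mul_zero]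
        · intro h; exact absurd (Finset.mem_univ _) h
      have hx0 : x p = 0 := by rw [← hc, hP0, Polynomial.coeff_zero]
      simpa using hx0
    obtain ⟨i, hi⟩ := Function.ne_iff.mp hzne
    have hpos : 0 < z ⬝ᵥ z := by
      rw [dotProduct]
      refine Finset.sum_pos' (fun i _ => mul_self_nonneg _) ⟨i, Finset.mem_univ i, ?_⟩
      exact mul_self_pos.mpr hi
    have : 0 < (k : ℝ)⁻¹ := by positivity
    exact mul_pos this hpos

lemma hankelDet_pos (k : ℕ) (b : Fin k → ℝ) (hb : Function.Injective b) (j : ℕ)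
    (hj : j < k) : 0 < hankelDet k b j :=
  (hankel_posDef k b hb j hj).det_pos

/-! ### Orthonormality -/

lemma inner_qq_lt (k : ℕ) (b : Fin k → ℝ) (hk : 0 < k) (i j : ℕ) (hij : i < j) :
    (∑ l, qPoly k b i (b l) * qPoly k b j (b l)) / k = 0 := by
  have hk' : (k : ℝ) ≠ 0 := Nat.cast_ne_zero.mpr hk.ne'
  have h := det_mrow_sum k b i Finset.univ (fun l => qPoly k b j (b l) / k)
    (fun l q => b l ^ (q : ℕ))
  have h1 : (∑ l, qPoly k b i (b l) * qPoly k b j (b l)) / k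
      = ∑ l, qPoly k b j (b l) / k * (mrow k b i fun q => b l ^ (q : ℕ)).det := by
    rw [Finset.sum_div]
    refine Finset.sum_congr rfl fun l _ => ?_
    rw [qPoly]; ring
  rw [h1, h]
  have h2 : (fun q : Fin (i + 1) => ∑ l, qPoly k b j (b l) / k * b l ^ (q : ℕ))
      = fun _ => (0 : ℝ) := by
    funext q
    have : ∑ l, qPoly k b j (b l) / k * b l ^ (q : ℕ)
        = (∑ l, b l ^ (q : ℕ) * qPoly k b j (b l)) / k := by
      rw [Finset.sum_div]; refine Finset.sum_congr rfl fun l _ => ?_; ring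
    rw [this, avg_pow_qPoly k b hk, det_mrow_moment_lt k b j (q : ℕ) (by omega)]
  rw [h2]
  exact Matrix.det_eq_zero_of_row_eq_zero (Fin.last i) (by simp [mrow])

/-- Determinant of the `mrow` matrix whose last row is `D·e_last`. -/
lemma det_mrow_single (k : ℕ) (b : Fin k → ℝ) (m : ℕ) (D : ℝ) :
    (mrow k b (m + 1) fun q => if (q : ℕ) < m + 1 then 0 else D).det
      = D * hankelDet k b m := by
  rw [Matrix.det_succ_row _ (Fin.last (m + 1))]
  rw [Finset.sum_eq_single (Fin.last (m + 1))]
  · have h1 : (mrow k b (m + 1) fun q => if (q : ℕ) < m + 1 then 0 else D)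
        (Fin.last (m + 1)) (Fin.last (m + 1)) = D := by
      simp [mrow]
    have h2 : ((-1 : ℝ)) ^ ((Fin.last (m + 1) : ℕ) + (Fin.last (m + 1) : ℕ)) = 1 := by
      simp only [Fin.val_last]
      rw [← two_mul, pow_mul, neg_one_sq, one_pow]
    rw [h1, h2, one_mul]
    congr 1
    rw [hankelDet]
    congr 1
    ext p q
    have hp : ((Fin.last (m + 1)).succAbove p : ℕ) = (p : ℕ) := by
      rw [Fin.succAbove_last]; rfl
    have hq : ((Fin.last (m + 1)).succAbove q : ℕ) = (q : ℕ) := by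
      rw [Fin.succAbove_last]; rfl
    simp only [Matrix.submatrix_apply, mrow, Matrix.of_apply, hp, hq]
    rw [if_pos (by omega : (p : ℕ) < m + 1)]
  · intro q _ hq
    have hql : (q : ℕ) < m + 1 := Fin.val_lt_last hq
    have : (mrow k b (m + 1) fun q => if (q : ℕ) < m + 1 then 0 else D)
        (Fin.last (m + 1)) q = 0 := by
      simp [mrow, hql]
      intro h; exact absurd h (by omega)
    rw [this, mul_zero, zero_mul]
  · intro h; exact absurd (Finset.mem_univ _) h

lemma inner_qq_self (k : ℕ) (b : Fin k → ℝ) (hk : 0 < k) (j : ℕ) :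
    (∑ l, qPoly k b j (b l) * qPoly k b j (b l)) / k
      = hankelDet k b (j - 1) * hankelDet k b j := by
  have hk' : (k : ℝ) ≠ 0 := Nat.cast_ne_zero.mpr hk.ne'
  rcases Nat.eq_zero_or_pos j with h0 | h0
  · subst h0
    simp only [qPoly_zero, mul_one, Nat.zero_sub, hankelDet_zero k b hk]
    rw [Finset.sum_const, Finset.card_univ, Fintype.card_fin]
    simp [hk']
  · obtain ⟨m, rfl⟩ : ∃ m, j = m + 1 := ⟨j - 1, by omega⟩
    have h := det_mrow_sum k b (m + 1) Finset.univ
      (fun l => qPoly k b (m + 1) (b l) / k) (fun l q => b l ^ (q : ℕ))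
    have h1 : (∑ l, qPoly k b (m + 1) (b l) * qPoly k b (m + 1) (b l)) / k
        = ∑ l, qPoly k b (m + 1) (b l) / k
            * (mrow k b (m + 1) fun q => b l ^ (q : ℕ)).det := by
      rw [Finset.sum_div]
      refine Finset.sum_congr rfl fun l _ => ?_
      rw [qPoly]; ring
    have h2 : (fun q : Fin (m + 2) => ∑ l, qPoly k b (m + 1) (b l) / k * b l ^ (q : ℕ))
        = fun q : Fin (m + 2) =>
            if (q : ℕ) < m + 1 then 0 else hankelDet k b (m + 1) := by
      funext q
      have : ∑ l, qPoly k b (m + 1) (b l) / k * b l ^ (q : ℕ)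
          = (∑ l, b l ^ (q : ℕ) * qPoly k b (m + 1) (b l)) / k := by
        rw [Finset.sum_div]; refine Finset.sum_congr rfl fun l _ => ?_; ring
      rw [this, avg_pow_qPoly k b hk]
      rcases lt_or_ge (q : ℕ) (m + 1) with hq | hq
      · rw [det_mrow_moment_lt k b (m + 1) _ hq, if_pos hq]
      · have hq' : (q : ℕ) = m + 1 := by omega
        rw [hq', det_mrow_moment_eq, if_neg (by omega)]
    rw [h1, h, h2, det_mrow_single]
    simp [mul_comm]

lemma ortho_aux (k : ℕ) (b : Fin k → ℝ) (hk : 0 < k) (hb : Function.Injective b)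
    (i j : ℕ) (hij : i ≤ j) (hjk : j < k) :
    (∑ l, orthoPoly k b i (b l) * orthoPoly k b j (b l)) / k
      = if i = j then 1 else 0 := by
  have hkr : (k : ℝ) ≠ 0 := Nat.cast_ne_zero.mpr hk.ne'
  have hsum : (∑ l, orthoPoly k b i (b l) * orthoPoly k b j (b l))
      = (Real.sqrt (hankelDet k b (i - 1) * hankelDet k b i))⁻¹
        * (Real.sqrt (hankelDet k b (j - 1) * hankelDet k b j))⁻¹
        * (∑ l, qPoly k b i (b l) * qPoly k b j (b l)) := by
    rw [Finset.mul_sum]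
    refine Finset.sum_congr rfl fun l _ => ?_
    rw [orthoPoly_eq k b hk, orthoPoly_eq k b hk]; ring
  have hmain : (∑ l, orthoPoly k b i (b l) * orthoPoly k b j (b l)) / k
      = (Real.sqrt (hankelDet k b (i - 1) * hankelDet k b i))⁻¹
        * (Real.sqrt (hankelDet k b (j - 1) * hankelDet k b j))⁻¹
        * ((∑ l, qPoly k b i (b l) * qPoly k b j (b l)) / k) := by
    rw [hsum, mul_div_assoc]
  rcases eq_or_lt_of_le hij with h | h
  · subst h
    rw [if_pos rfl, hmain, inner_qq_self k b hk]
    have hD : 0 < hankelDet k b (i - 1) * hankelDet k b i :=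
      mul_pos (hankelDet_pos k b hb _ (by omega)) (hankelDet_pos k b hb _ hjk)
    rw [← Real.sqrt_mul_self hD.le]
    have hs : Real.sqrt (hankelDet k b (i - 1) * hankelDet k b i) ≠ 0 :=
      (Real.sqrt_pos.mpr hD).ne'
    rw [Real.sqrt_mul_self hD.le, ← mul_inv, Real.mul_self_sqrt hD.le, inv_mul_cancel₀ hD.ne']
  · rw [if_neg h.ne, hmain, inner_qq_lt k b hk i j h, mul_zero]

/-! ### Main theorem -/

/-- the empirical Christoffel function takes the value 1/k at each
atom: `∑_{i=0}^{k−1} P_i(b_l)² = k` for every `l = 1, …, k`. -/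
theorem stmt10 (k : ℕ) (hk : 1 ≤ k) (b : Fin k → ℝ) (hb : Function.Injective b) :
    ∀ l : Fin k, ∑ i ∈ Finset.range k, (orthoPoly k b i (b l)) ^ 2 = (k : ℝ) := by
  intro l
  have hk0 : 0 < k := hk
  have hkr : (k : ℝ) ≠ 0 := Nat.cast_ne_zero.mpr hk0.ne'
  set A : Matrix (Fin k) (Fin k) ℝ :=
    Matrix.of fun i l => orthoPoly k b (i : ℕ) (b l) with hA
  have ortho : ∀ i j : Fin k,
      (∑ l, orthoPoly k b (i : ℕ) (b l) * orthoPoly k b (j : ℕ) (b l)) / k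
        = if i = j then 1 else 0 := by
    intro i j
    rcases le_or_gt (i : ℕ) (j : ℕ) with h | h
    · rw [ortho_aux k b hk0 hb i j h j.isLt]
      simp [Fin.ext_iff]
    · have hcomm : (∑ l, orthoPoly k b (i : ℕ) (b l) * orthoPoly k b (j : ℕ) (b l)) / (k : ℝ)
          = (∑ l, orthoPoly k b (j : ℕ) (b l) * orthoPoly k b (i : ℕ) (b l)) / (k : ℝ) := by
        congr 1
        exact Finset.sum_congr rfl fun l _ => mul_comm _ _
      rw [hcomm, ortho_aux k b hk0 hb j i h.le i.isLt,
        if_neg (by omega : ¬ (j : ℕ) = (i : ℕ)), if_neg (by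
          intro hc; subst hc; exact lt_irrefl _ h)]
  have hAAT : A * A.transpose = (k : ℝ) • 1 := by
    ext i j
    have := ortho i j
    have h2 : (∑ l, orthoPoly k b (i : ℕ) (b l) * orthoPoly k b (j : ℕ) (b l))
        = (k : ℝ) * (if i = j then 1 else 0) := by
      rw [← this]; field_simp
    simp only [Matrix.mul_apply, Matrix.transpose_apply, hA, Matrix.of_apply,
      Matrix.smul_apply, Matrix.one_apply, smul_eq_mul]
    rw [h2]
  have hinv : A * ((k : ℝ)⁻¹ • A.transpose) = 1 := by
    rw [Matrix.mul_smul, hAAT, smul_smul, inv_mul_cancel₀ hkr, one_smul]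
  have hinv2 : ((k : ℝ)⁻¹ • A.transpose) * A = 1 := mul_eq_one_comm.mp hinv
  have hATA : A.transpose * A = (k : ℝ) • 1 := by
    calc A.transpose * A = (k : ℝ) • (((k : ℝ)⁻¹ • A.transpose) * A) := by
          rw [Matrix.smul_mul, smul_smul, mul_inv_cancel₀ hkr, one_smul]
      _ = (k : ℝ) • 1 := by rw [hinv2]
  have hdiag := congrFun (congrFun hATA l) l
  simp only [Matrix.mul_apply, Matrix.transpose_apply, hA, Matrix.of_apply,
    Matrix.smul_apply, Matrix.one_apply_eq, smul_eq_mul, mul_one] at hdiag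
  rw [← Fin.sum_univ_eq_sum_range (fun i => orthoPoly k b i (b l) ^ 2) k]
  rw [← hdiag]
  exact Finset.sum_congr rfl fun i _ => pow_two _
end

section
/- Let r and l be positive integers, let π : {0, 1, ..., r} → {1, ..., l} be a function with π(0) = π(r) whose image is all of {1, ..., l}, and let s ∈ (0, 1]. For λ > 0 define I(λ, s) = ∫_{[0,s]^l} exp(−λ · ∑_{i=1}^r (t_{π(i−1)} − t_{π(i)})^2) dt_1 ⋯ dt_l. Then the ratio I(λ, s) / I(λ, 1) tends to s as λ → ∞. -/
open MeasureTheory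
open Filter Set

namespace Stmt12Aux

noncomputable section

variable {l : ℕ}

def box (l : ℕ) (a : ℝ) : Set (Fin l → ℝ) := Set.univ.pi fun _ => Set.Icc 0 a

lemma measurableSet_box (a : ℝ) : MeasurableSet (box l a) :=
  MeasurableSet.univ_pi fun _ => measurableSet_Icc

lemma volume_box (a : ℝ) : volume (box l a) = ENNReal.ofReal a ^ l := by
  rw [box, volume_pi_pi]
  simp [Real.volume_Icc]

lemma volume_box_lt_top (a : ℝ) : volume (box l a) < ⊤ := by
  rw [volume_box]; exact ENNReal.pow_lt_top ENNReal.ofReal_lt_top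

lemma volume_box_toReal {a : ℝ} (ha : 0 ≤ a) : (volume (box l a)).toReal = a ^ l := by
  rw [volume_box, ENNReal.toReal_pow, ENNReal.toReal_ofReal ha]

variable (Q : (Fin l → ℝ) → ℝ)

def J (lam a : ℝ) : ℝ := ∫ t in box l a, Real.exp (-lam * Q t)

variable {Q}
variable (hQc : Continuous Q) (hQ0 : ∀ t, 0 ≤ Q t)

section Basic
include hQc

lemma cont_f (lam : ℝ) : Continuous fun t => Real.exp (-lam * Q t) :=
  Real.continuous_exp.comp (continuous_const.mul hQc)

include hQ0

lemma integrableOn_f {lam : ℝ} (hlam : 0 ≤ lam) {A : Set (Fin l → ℝ)}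
    (hA : MeasurableSet A) (hAfin : volume A ≠ ⊤) :
    IntegrableOn (fun t => Real.exp (-lam * Q t)) A := by
  refine Measure.integrableOn_of_bounded (M := 1) hAfin
    (cont_f hQc lam).aestronglyMeasurable ?_
  filter_upwards with t
  rw [Real.norm_eq_abs, abs_of_pos (Real.exp_pos _)]
  refine Real.exp_le_one_iff.mpr ?_
  have := hQ0 t
  nlinarith

lemma J_nonneg {lam a : ℝ} : 0 ≤ J Q lam a :=
  setIntegral_nonneg (measurableSet_box a) fun t _ => (Real.exp_pos _).le

lemma J_mono {lam : ℝ} (hlam : 0 ≤ lam) {a b : ℝ} (hab : a ≤ b) :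
    J Q lam a ≤ J Q lam b := by
  refine setIntegral_mono_set
    (integrableOn_f hQc hQ0 hlam (measurableSet_box b) (volume_box_lt_top b).ne) ?_ ?_
  · filter_upwards with t using (Real.exp_pos _).le
  · refine HasSubset.Subset.eventuallyLE fun t ht => ?_
    intro i hi
    have := ht i hi
    exact ⟨this.1, this.2.trans hab⟩

lemma J_pos_lb {lam a CQ : ℝ} (hlam : 0 ≤ lam) (ha : 0 ≤ a)
    (hQub : ∀ t ∈ box l a, Q t ≤ CQ) :
    a ^ l * Real.exp (-lam * CQ) ≤ J Q lam a := by
  have h : ∫ _ in box l a, Real.exp (-lam * CQ) ≤ J Q lam a := by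
    refine setIntegral_mono_on
      (integrableOn_const (volume_box_lt_top (l := l) a).ne)
      (integrableOn_f hQc hQ0 hlam (measurableSet_box a) (volume_box_lt_top a).ne)
      (measurableSet_box a)
      (fun t ht => ?_)
    refine Real.exp_le_exp.mpr ?_
    have := hQub t ht
    nlinarith
  calc a ^ l * Real.exp (-lam * CQ)
      = ∫ _ in box l a, Real.exp (-lam * CQ) := by
        rw [setIntegral_const, smul_eq_mul, measureReal_def, volume_box_toReal ha]
    _ ≤ J Q lam a := h

end Basic

section Shift

variable (hQinv : ∀ (t : Fin l → ℝ) (c : ℝ), Q (fun i => t i + c) = Q t)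

include hQinv

lemma J_shift (lam a c : ℝ) :
    ∫ t in Set.univ.pi (fun _ : Fin l => Set.Icc c (c + a)), Real.exp (-lam * Q t)
      = J Q lam a := by
  have hS : MeasurableSet (Set.univ.pi (fun _ : Fin l => Set.Icc c (c + a))) :=
    MeasurableSet.univ_pi fun _ => measurableSet_Icc
  rw [J, ← integral_indicator (measurableSet_box a), ← integral_indicator hS]
  rw [← integral_add_right_eq_self
    (Set.indicator (Set.univ.pi (fun _ : Fin l => Set.Icc c (c + a)))
      (fun t => Real.exp (-lam * Q t))) (fun _ : Fin l => c)]
  congr 1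
  funext x
  have hmem : (x + fun _ => c) ∈ Set.univ.pi (fun _ : Fin l => Set.Icc c (c + a))
      ↔ x ∈ box l a := by
    constructor
    · intro h i _
      have := h i (Set.mem_univ i)
      simp only [Pi.add_apply, Set.mem_Icc] at this
      constructor <;> linarith [this.1, this.2]
    · intro h i _
      have := h i (Set.mem_univ i)
      simp only [Pi.add_apply, Set.mem_Icc] at this ⊢
      constructor <;> [linarith [this.1]; linarith [this.2]]
  have hfeq : Real.exp (-lam * Q (x + fun _ => c)) = Real.exp (-lam * Q x) := by
    have : (x + fun _ => c) = fun i => x i + c := by funext i; simp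
    rw [this, hQinv]
  by_cases hx : x ∈ box l a
  · rw [Set.indicator_of_mem (hmem.mpr hx), Set.indicator_of_mem hx, hfeq]
  · rw [Set.indicator_of_notMem (fun h => hx (hmem.mp h)), Set.indicator_of_notMem hx]

lemma J_ioc_shift (lam a c : ℝ) (ha : 0 ≤ a) :
    ∫ t in Set.univ.pi (fun _ : Fin l => Set.Ioc c (c + a)), Real.exp (-lam * Q t)
      = J Q lam a := by
  rw [← J_shift hQinv lam a c]
  refine setIntegral_congr_set ?_
  have h := MeasureTheory.Measure.pi_Ioc_ae_eq_pi_Icc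
    (μ := fun _ : Fin l => (volume : Measure ℝ)) (s := Set.univ)
    (f := fun _ : Fin l => c) (g := fun _ : Fin l => c + a)
  rw [← MeasureTheory.volume_pi] at h
  exact h

include hQc hQ0

lemma J_low (hl : 0 < l) {lam : ℝ} (hlam : 0 ≤ lam) {v : ℝ} (hv : 0 < v) (m : ℕ) :
    (m : ℝ) * J Q lam v ≤ J Q lam ((m : ℝ) * v) := by
  classical
  set f := fun t => Real.exp (-lam * Q t) with hf
  set D : ℕ → Set (Fin l → ℝ) :=
    fun j => Set.univ.pi fun _ => Set.Ioc ((j : ℝ) * v) ((j : ℝ) * v + v) with hD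
  have hDmeas : ∀ j, MeasurableSet (D j) :=
    fun j => MeasurableSet.univ_pi fun _ => measurableSet_Ioc
  have hDsub : ∀ j ∈ Finset.range m, D j ⊆ box l ((m : ℝ) * v) := by
    intro j hj t ht i _
    have := ht i (Set.mem_univ i)
    simp only [Set.mem_Ioc] at this
    have hjm : (j : ℝ) + 1 ≤ (m : ℝ) := by
      have := Finset.mem_range.mp hj
      exact_mod_cast this
    have hj0 : (0:ℝ) ≤ (j : ℝ) := Nat.cast_nonneg j
    constructor
    · nlinarith [this.1]
    · nlinarith [this.2]
  have hDdisj : Set.Pairwise (↑(Finset.range m)) (Function.onFun Disjoint D) := by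
    intro i _ j _ hij
    refine Set.disjoint_left.mpr fun t hti htj => ?_
    have h1 := hti ⟨0, hl⟩ (Set.mem_univ _)
    have h2 := htj ⟨0, hl⟩ (Set.mem_univ _)
    simp only [Set.mem_Ioc] at h1 h2
    rcases lt_or_gt_of_ne hij with h | h
    · have hc : (i:ℝ) + 1 ≤ (j:ℝ) := by exact_mod_cast h
      nlinarith [h1.2, h2.1]
    · have hc : (j:ℝ) + 1 ≤ (i:ℝ) := by exact_mod_cast h
      nlinarith [h2.2, h1.1]
  have hint : ∀ j ∈ Finset.range m, IntegrableOn f (D j) := fun j hj =>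
    integrableOn_f hQc hQ0 hlam (hDmeas j)
      (lt_of_le_of_lt (measure_mono (hDsub j hj)) (volume_box_lt_top _)).ne
  have hunion := integral_biUnion_finset (μ := volume) (f := f) (Finset.range m)
    (fun j _ => hDmeas j) hDdisj hint
  have heach : ∀ j ∈ Finset.range m, ∫ t in D j, f t = J Q lam v := fun j _ =>
    J_ioc_shift hQinv lam v ((j : ℝ) * v) hv.le
  calc (m : ℝ) * J Q lam v
      = ∑ j ∈ Finset.range m, ∫ t in D j, f t := by
        rw [Finset.sum_congr rfl heach, Finset.sum_const, Finset.card_range, nsmul_eq_mul]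
    _ = ∫ t in ⋃ j ∈ Finset.range m, D j, f t := hunion.symm
    _ ≤ J Q lam ((m : ℝ) * v) := by
        refine setIntegral_mono_set
          (integrableOn_f hQc hQ0 hlam (measurableSet_box _) (volume_box_lt_top _).ne)
          ?_ ?_
        · filter_upwards with t using (Real.exp_pos _).le
        · exact (Set.iUnion₂_subset hDsub).eventuallyLE

omit hQc hQ0 hQinv in
lemma volume_sbox (c a : ℝ) :
    volume (Set.univ.pi fun _ : Fin l => Set.Icc c (c + a)) = ENNReal.ofReal a ^ l := by
  rw [volume_pi_pi]
  simp [Real.volume_Icc]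

lemma J_up (hl : 0 < l) {R : ℝ} (hR : 0 < R)
    (hQosc : ∀ (t : Fin l → ℝ) (j k : Fin l), (t j - t k) ^ 2 ≤ R * Q t)
    {lam v δ : ℝ} (hlam : 0 ≤ lam) (hv : 0 < v) (hδ : 0 ≤ δ) {m : ℕ} (hm : 1 ≤ m) :
    J Q lam ((m : ℝ) * v) ≤
      (m : ℝ) * J Q lam (v + δ) + ((m : ℝ) * v) ^ l * Real.exp (-lam * (δ ^ 2 / R)) := by
  classical
  haveI : Nonempty (Fin l) := ⟨⟨0, hl⟩⟩
  set f := fun t => Real.exp (-lam * Q t) with hf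
  set T := (m : ℝ) * v with hT
  have hm0 : (0:ℝ) < (m:ℝ) := by exact_mod_cast hm
  have hT0 : 0 ≤ T := by positivity
  set S : ℕ → Set (Fin l → ℝ) :=
    fun j => Set.univ.pi fun _ => Set.Icc ((j : ℝ) * v) ((j : ℝ) * v + (v + δ)) with hS
  have hSmeas : ∀ j, MeasurableSet (S j) :=
    fun j => MeasurableSet.univ_pi fun _ => measurableSet_Icc
  set E := Real.exp (-lam * (δ ^ 2 / R)) with hE
  set g := fun t => (∑ j ∈ Finset.range m, Set.indicator (S j) f t)
      + Set.indicator (box l T) (fun _ => E) t with hg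
  have hfpos : ∀ t, 0 ≤ f t := fun t => (Real.exp_pos _).le
  have key : ∀ t, Set.indicator (box l T) f t ≤ g t := by
    intro t
    have hgsum0 : 0 ≤ ∑ j ∈ Finset.range m, Set.indicator (S j) f t :=
      Finset.sum_nonneg fun j _ => Set.indicator_nonneg (fun x _ => hfpos x) t
    have hind0 : 0 ≤ Set.indicator (box l T) (fun _ => E) t :=
      Set.indicator_nonneg (fun x _ => (Real.exp_pos _).le) t
    have hgt : g t = (∑ j ∈ Finset.range m, Set.indicator (S j) f t)
        + Set.indicator (box l T) (fun _ => E) t := rfl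
    by_cases ht : t ∈ box l T
    swap
    · rw [Set.indicator_of_notMem ht, hgt]
      linarith
    rw [Set.indicator_of_mem ht]
    by_cases hosc : ∀ j k : Fin l, |t j - t k| ≤ δ
    · obtain ⟨i0, _, hi0⟩ := Finset.exists_mem_eq_inf' (Finset.univ_nonempty (α := Fin l)) t
      set c := Finset.univ.inf' Finset.univ_nonempty t with hc
      have hcle : ∀ i, c ≤ t i := fun i => Finset.inf'_le t (Finset.mem_univ i)
      have hbox : ∀ i, 0 ≤ t i ∧ t i ≤ T := by
        intro i
        exact ht i (Set.mem_univ i)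
      have hc0 : 0 ≤ c := by rw [hi0]; exact (hbox i0).1
      have hcT : c ≤ T := le_trans (hcle ⟨0, hl⟩) (hbox ⟨0, hl⟩).2
      set j : ℕ := min ⌊c / v⌋₊ (m - 1) with hj
      have hjm : j ∈ Finset.range m :=
        Finset.mem_range.mpr (lt_of_le_of_lt (min_le_right _ _) (Nat.sub_lt hm Nat.one_pos))
      have hjle : (j : ℝ) * v ≤ c := by
        have h1 : (j : ℝ) ≤ ⌊c / v⌋₊ := by exact_mod_cast min_le_left _ _
        have h2 : (⌊c / v⌋₊ : ℝ) ≤ c / v := Nat.floor_le (by positivity)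
        rw [← le_div_iff₀ hv]
        linarith
      have hcj : c ≤ ((j : ℝ) + 1) * v := by
        by_cases hcase : ⌊c / v⌋₊ ≤ m - 1
        · have hjeq : j = ⌊c / v⌋₊ := min_eq_left hcase
          have h2 : c / v < ⌊c / v⌋₊ + 1 := Nat.lt_floor_add_one _
          rw [hjeq]
          have := (div_lt_iff₀ hv).mp h2
          linarith
        · push_neg at hcase
          have hjeq : j = m - 1 := min_eq_right (Nat.le_of_lt hcase)
          have : ((j : ℝ) + 1) = (m : ℝ) := by
            rw [hjeq]
            have : ((m - 1 : ℕ) : ℝ) = (m : ℝ) - 1 := by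
              rw [Nat.cast_sub hm]; simp
            rw [this]; ring
          rw [this]; exact hcT
      have htS : t ∈ S j := by
        intro i _
        simp only [Set.mem_Icc]
        constructor
        · linarith [hjle, hcle i]
        · have h1 : t i - c ≤ δ := by
            have := hosc i i0
            rw [← hi0] at this
            have h2 := abs_le.mp this
            linarith [h2.1]
          linarith [hcj]
      have hsingle : Set.indicator (S j) f t ≤ ∑ j ∈ Finset.range m, Set.indicator (S j) f t :=
        Finset.single_le_sum (f := fun j => Set.indicator (S j) f t)
          (fun j _ => Set.indicator_nonneg (fun x _ => hfpos x) t) hjm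
      rw [Set.indicator_of_mem htS] at hsingle
      rw [hgt]
      linarith
    · push_neg at hosc
      obtain ⟨j0, k0, hjk⟩ := hosc
      have hft : f t ≤ E := by
        rw [hf, hE]
        apply Real.exp_le_exp.mpr
        have h1 : δ ^ 2 ≤ (t j0 - t k0) ^ 2 := by
          nlinarith [sq_abs (t j0 - t k0), abs_nonneg (t j0 - t k0)]
        have h2 : δ ^ 2 ≤ R * Q t := h1.trans (hQosc t j0 k0)
        have h3 : δ ^ 2 / R ≤ Q t := (div_le_iff₀ hR).mpr (by nlinarith)
        nlinarith
      rw [hgt]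
      have : Set.indicator (box l T) (fun _ => E) t = E := Set.indicator_of_mem ht _
      linarith
  have hbint : IntegrableOn f (box l T) :=
    integrableOn_f hQc hQ0 hlam (measurableSet_box T) (volume_box_lt_top T).ne
  have hfint : Integrable (Set.indicator (box l T) f) :=
    (integrable_indicator_iff (measurableSet_box T)).mpr hbint
  have hSvol : ∀ j : ℕ, volume (S j) < ⊤ := by
    intro j
    rw [hS]
    rw [volume_sbox]
    exact ENNReal.pow_lt_top ENNReal.ofReal_lt_top
  have hSIOn : ∀ j, IntegrableOn f (S j) := fun j =>
    integrableOn_f hQc hQ0 hlam (hSmeas j) (hSvol j).ne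
  have hSint : ∀ j, Integrable (Set.indicator (S j) f) := fun j =>
    (integrable_indicator_iff (hSmeas j)).mpr (hSIOn j)
  have hEint : Integrable (Set.indicator (box l T) (fun _ => E)) :=
    (integrable_indicator_iff (measurableSet_box T)).mpr
      (integrableOn_const (volume_box_lt_top T).ne)
  have hgint : Integrable g := by
    rw [hg]
    exact (integrable_finset_sum _ (fun j _ => hSint j)).add hEint
  have hmono := integral_mono hfint hgint key
  rw [integral_indicator (measurableSet_box T)] at hmono
  have hrhs : ∫ t, g t = (m : ℝ) * J Q lam (v + δ) + T ^ l * E := by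
    rw [hg]
    rw [integral_add (integrable_finset_sum _ (fun j _ => hSint j)) hEint]
    congr 1
    · rw [integral_finset_sum _ (fun j _ => hSint j)]
      have : ∀ j ∈ Finset.range m, ∫ t, Set.indicator (S j) f t = J Q lam (v + δ) := by
        intro j _
        rw [integral_indicator (hSmeas j)]
        exact J_shift hQinv lam (v + δ) ((j : ℝ) * v)
      rw [Finset.sum_congr rfl this, Finset.sum_const, Finset.card_range, nsmul_eq_mul]
    · rw [integral_indicator (measurableSet_box T), setIntegral_const, smul_eq_mul,
        measureReal_def, volume_box_toReal hT0]
  rw [hrhs] at hmono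
  exact hmono

lemma tail_negligible (hl : 0 < l) {R : ℝ} (hR : 0 < R)
    (hQub : ∀ a : ℝ, 0 ≤ a → ∀ t ∈ box l a, Q t ≤ R * a ^ 2)
    {w δ ε : ℝ} (hw : 0 < w) (hδ : 0 < δ) (hε : 0 < ε) :
    ∀ᶠ lam in atTop, Real.exp (-lam * (δ ^ 2 / R)) < ε * J Q lam w := by
  set c := δ ^ 2 / R with hc
  have hc0 : 0 < c := by positivity
  have hlim : Tendsto (fun lam : ℝ => lam ^ l * Real.exp (-(c * lam))) atTop (nhds 0) := by
    have h0 : Tendsto (fun x : ℝ => (c⁻¹) ^ l * (x ^ l * Real.exp (-x))) atTop (nhds 0) := by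
      simpa using (Real.tendsto_pow_mul_exp_neg_atTop_nhds_zero l).const_mul ((c⁻¹) ^ l)
    have h1 : Tendsto (fun lam : ℝ => c * lam) atTop atTop :=
      Tendsto.const_mul_atTop hc0 tendsto_id
    have h2 := h0.comp h1
    refine h2.congr fun lam => ?_
    simp only [Function.comp_apply]
    rw [mul_pow]
    rw [← mul_assoc, ← mul_assoc, ← mul_pow, inv_mul_cancel₀ hc0.ne', one_pow, one_mul]
  have hev : ∀ᶠ lam : ℝ in atTop,
      lam ^ l * Real.exp (-(c * lam)) < ε * Real.exp (-R) :=
    hlim.eventually (gt_mem_nhds (by positivity))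
  filter_upwards [hev, eventually_ge_atTop (1 : ℝ),
    eventually_ge_atTop (1 / w ^ 2)] with lam h1 h2 h3
  have hlam0 : (0:ℝ) < lam := lt_of_lt_of_le one_pos h2
  have hs : 0 < Real.sqrt lam := Real.sqrt_pos.mpr hlam0
  set η := 1 / Real.sqrt lam with hη
  have hη0 : 0 < η := by positivity
  have h4 : 1 / w ≤ Real.sqrt lam := by
    calc 1 / w = Real.sqrt (1 / w ^ 2) := by
          rw [one_div, one_div, Real.sqrt_inv, Real.sqrt_sq hw.le]
      _ ≤ Real.sqrt lam := Real.sqrt_le_sqrt h3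
  have hηw : η ≤ w := by
    rw [hη, div_le_iff₀ hs]
    have h5 : 1 ≤ Real.sqrt lam * w := by
      have := (div_le_iff₀ hw).mp h4
      linarith [mul_comm w (Real.sqrt lam)]
    linarith [mul_comm w (Real.sqrt lam)]
  have hJ1 : η ^ l * Real.exp (-lam * (R * η ^ 2)) ≤ J Q lam η :=
    J_pos_lb hQc hQ0 hlam0.le hη0.le (hQub η hη0.le)
  have hη2 : η ^ 2 = 1 / lam := by
    rw [hη, div_pow, one_pow, Real.sq_sqrt hlam0.le]
  have hexp : -lam * (R * η ^ 2) = -R := by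
    rw [hη2]; field_simp
  have hJ2 : J Q lam η ≤ J Q lam w := J_mono hQc hQ0 hlam0.le hηw
  have hsl : Real.sqrt lam ≤ lam := by
    have h6 : lam ≤ lam ^ 2 := by nlinarith
    calc Real.sqrt lam ≤ Real.sqrt (lam ^ 2) := Real.sqrt_le_sqrt h6
      _ = lam := Real.sqrt_sq hlam0.le
  have h1' : lam ^ l * Real.exp (-lam * c) < ε * Real.exp (-R) := by
    rw [show -lam * c = -(c * lam) by ring]
    exact h1
  have hkey : (Real.sqrt lam) ^ l * Real.exp (-lam * c) < ε * Real.exp (-R) :=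
    calc (Real.sqrt lam) ^ l * Real.exp (-lam * c)
        ≤ lam ^ l * Real.exp (-lam * c) :=
          mul_le_mul_of_nonneg_right (pow_le_pow_left₀ hs.le hsl l) (Real.exp_pos _).le
      _ < ε * Real.exp (-R) := h1'
  have hsη : Real.sqrt lam * η = 1 := by
    rw [hη]; field_simp
  calc Real.exp (-lam * c)
      = ((Real.sqrt lam) ^ l * Real.exp (-lam * c)) * η ^ l := by
        rw [show ((Real.sqrt lam) ^ l * Real.exp (-lam * c)) * η ^ l
            = Real.exp (-lam * c) * ((Real.sqrt lam * η) ^ l) from by rw [mul_pow]; ring,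
          hsη, one_pow, mul_one]
    _ < (ε * Real.exp (-R)) * η ^ l := mul_lt_mul_of_pos_right hkey (pow_pos hη0 l)
    _ = ε * (η ^ l * Real.exp (-R)) := by ring
    _ ≤ ε * J Q lam w := by
        refine mul_le_mul_of_nonneg_left ?_ hε.le
        calc η ^ l * Real.exp (-R) = η ^ l * Real.exp (-lam * (R * η ^ 2)) := by rw [hexp]
          _ ≤ J Q lam η := hJ1
          _ ≤ J Q lam w := hJ2

end Shift

section Walk

variable {r : ℕ} (π : Fin (r + 1) → Fin l)

def W (t : Fin l → ℝ) : ℝ := ∑ i : Fin r, (t (π i.castSucc) - t (π i.succ)) ^ 2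

lemma W_cont : Continuous (W π) := by
  unfold W
  exact continuous_finset_sum _ fun i _ =>
    ((continuous_apply (π i.castSucc)).sub (continuous_apply (π i.succ))).pow 2

lemma W_nonneg : ∀ t, 0 ≤ W π t := fun t => Finset.sum_nonneg fun i _ => sq_nonneg _

lemma W_inv : ∀ (t : Fin l → ℝ) (c : ℝ), W π (fun i => t i + c) = W π t := by
  intro t c
  refine Finset.sum_congr rfl fun i _ => by ring

lemma W_ub : ∀ a : ℝ, 0 ≤ a → ∀ t ∈ box l a, W π t ≤ (r : ℝ) * a ^ 2 := by
  intro a ha t ht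
  have hterm : ∀ i : Fin r, (t (π i.castSucc) - t (π i.succ)) ^ 2 ≤ a ^ 2 := by
    intro i
    have h1 := ht (π i.castSucc) (Set.mem_univ _)
    have h2 := ht (π i.succ) (Set.mem_univ _)
    simp only [Set.mem_Icc] at h1 h2
    nlinarith [h1.1, h1.2, h2.1, h2.2]
  calc W π t ≤ ∑ _i : Fin r, a ^ 2 := Finset.sum_le_sum fun i _ => hterm i
    _ = (r : ℝ) * a ^ 2 := by
      rw [Finset.sum_const, Finset.card_univ, Fintype.card_fin, nsmul_eq_mul]

lemma W_osc (hπ : Function.Surjective π) (t : Fin l → ℝ) (j k : Fin l) :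
    (t j - t k) ^ 2 ≤ (r : ℝ) * W π t := by
  obtain ⟨a, rfl⟩ := hπ j
  obtain ⟨b, rfl⟩ := hπ k
  set u : ℕ → ℝ :=
    fun n => t (π ⟨min n r, Nat.lt_succ_of_le (min_le_right n r)⟩) with hu
  have hux : ∀ x : Fin (r + 1), u x.val = t (π x) := by
    intro x
    have h : (⟨min (x : ℕ) r, Nat.lt_succ_of_le (min_le_right (x : ℕ) r)⟩ : Fin (r + 1)) = x :=
      Fin.ext (min_eq_left (Nat.lt_succ_iff.mp x.isLt))
    show t (π ⟨min (x : ℕ) r, Nat.lt_succ_of_le (min_le_right (x : ℕ) r)⟩) = t (π x)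
    rw [h]
  have main : ∀ a b : Fin (r + 1), (a : ℕ) ≤ (b : ℕ) →
      |t (π a) - t (π b)| ≤ ∑ i : Fin r, |t (π i.castSucc) - t (π i.succ)| := by
    intro a b hab
    have hd := dist_le_range_sum_dist (fun n => u (a.val + n)) (b.val - a.val)
    simp only [Nat.add_zero] at hd
    rw [Nat.add_sub_cancel' hab] at hd
    have hstep : ∑ i ∈ Finset.range (b.val - a.val),
        dist (u (a.val + i)) (u (a.val + i + 1))
        = ∑ n ∈ Finset.Ico a.val b.val, dist (u n) (u (n + 1)) := by
      rw [Finset.sum_Ico_eq_sum_range]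
    have hsub : ∑ n ∈ Finset.Ico a.val b.val, dist (u n) (u (n + 1))
        ≤ ∑ n ∈ Finset.range r, dist (u n) (u (n + 1)) := by
      refine Finset.sum_le_sum_of_subset_of_nonneg ?_ fun n _ _ => dist_nonneg
      intro n hn
      rw [Finset.mem_Ico] at hn
      rw [Finset.mem_range]
      exact lt_of_lt_of_le hn.2 (Nat.lt_succ_iff.mp b.isLt)
    have hpair : ∀ i : Fin r, dist (u i.val) (u (i.val + 1))
        = |t (π i.castSucc) - t (π i.succ)| := by
      intro i
      have e1 : u i.val = t (π i.castSucc) := by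
        have := hux i.castSucc
        simpa using this
      have e2 : u (i.val + 1) = t (π i.succ) := by
        have := hux i.succ
        simpa using this
      rw [e1, e2, Real.dist_eq]
    have hfin : ∑ n ∈ Finset.range r, dist (u n) (u (n + 1))
        = ∑ i : Fin r, |t (π i.castSucc) - t (π i.succ)| := by
      rw [← Fin.sum_univ_eq_sum_range]
      exact Finset.sum_congr rfl fun i _ => hpair i
    have hab2 : |t (π a) - t (π b)| = dist (u a.val) (u b.val) := by
      rw [hux a, hux b, Real.dist_eq]
    rw [hab2]
    calc dist (u a.val) (u b.val)
        ≤ ∑ i ∈ Finset.range (b.val - a.val),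
            dist (u (a.val + i)) (u (a.val + i + 1)) := hd
      _ = ∑ n ∈ Finset.Ico a.val b.val, dist (u n) (u (n + 1)) := hstep
      _ ≤ ∑ n ∈ Finset.range r, dist (u n) (u (n + 1)) := hsub
      _ = ∑ i : Fin r, |t (π i.castSucc) - t (π i.succ)| := hfin
  have habs : |t (π a) - t (π b)| ≤ ∑ i : Fin r, |t (π i.castSucc) - t (π i.succ)| := by
    rcases le_total (a : ℕ) (b : ℕ) with h | h
    · exact main a b h
    · rw [abs_sub_comm]
      exact main b a h
  have hcs : (∑ i : Fin r, |t (π i.castSucc) - t (π i.succ)|) ^ 2 ≤ (r : ℝ) * W π t := by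
    have := sq_sum_le_card_mul_sum_sq
      (s := (Finset.univ : Finset (Fin r)))
      (f := fun i => |t (π i.castSucc) - t (π i.succ)|)
    simp only [Finset.card_univ, Fintype.card_fin, sq_abs] at this
    exact this
  calc (t (π a) - t (π b)) ^ 2 = |t (π a) - t (π b)| ^ 2 := (sq_abs _).symm
    _ ≤ (∑ i : Fin r, |t (π i.castSucc) - t (π i.succ)|) ^ 2 := by
        have h0 : (0:ℝ) ≤ |t (π a) - t (π b)| := abs_nonneg _
        nlinarith [habs]
    _ ≤ (r : ℝ) * W π t := hcs

end Walk

lemma lim_up (s : ℝ) :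
    Tendsto (fun k : ℕ => ((k : ℝ) * s + 1) / ((k : ℝ) - 1)) atTop (nhds s) := by
  have h := tendsto_one_div_atTop_nhds_zero_nat (𝕜 := ℝ)
  have hnum : Tendsto (fun k : ℕ => s + 1 / (k : ℝ)) atTop (nhds (s + 0)) :=
    tendsto_const_nhds.add h
  have hden : Tendsto (fun k : ℕ => 1 - 1 / (k : ℝ)) atTop (nhds (1 - 0)) :=
    tendsto_const_nhds.sub h
  rw [add_zero] at hnum
  rw [sub_zero] at hden
  have hdiv := hnum.div hden one_ne_zero
  rw [div_one] at hdiv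
  refine hdiv.congr' ?_
  filter_upwards [eventually_ge_atTop 2] with k hk
  have hk2 : (2 : ℝ) ≤ (k : ℝ) := by exact_mod_cast hk
  have hk0 : (k : ℝ) ≠ 0 := by linarith
  have hk1 : (k : ℝ) - 1 ≠ 0 := by intro h'; rw [sub_eq_zero] at h'; linarith [h'.symm]
  rw [Pi.div_apply]
  field_simp

lemma lim_lo (s : ℝ) :
    Tendsto (fun k : ℕ => ((k : ℝ) * s - 1) / ((k : ℝ) + 3)) atTop (nhds s) := by
  have h := tendsto_one_div_atTop_nhds_zero_nat (𝕜 := ℝ)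
  have hnum : Tendsto (fun k : ℕ => s - 1 / (k : ℝ)) atTop (nhds (s - 0)) :=
    tendsto_const_nhds.sub h
  have hden : Tendsto (fun k : ℕ => 1 + 3 * (1 / (k : ℝ))) atTop (nhds (1 + 3 * 0)) :=
    tendsto_const_nhds.add (h.const_mul 3)
  rw [sub_zero] at hnum
  rw [mul_zero, add_zero] at hden
  have hdiv := hnum.div hden one_ne_zero
  rw [div_one] at hdiv
  refine hdiv.congr' ?_
  filter_upwards [eventually_ge_atTop 2] with k hk
  have hk2 : (2 : ℝ) ≤ (k : ℝ) := by exact_mod_cast hk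
  have hk0 : (k : ℝ) ≠ 0 := by linarith
  have hk3 : (k : ℝ) + 3 ≠ 0 := by linarith
  rw [Pi.div_apply]
  field_simp


set_option maxHeartbeats 1000000 in
lemma ub_event {r l : ℕ} (hr : 0 < r) (hl : 0 < l) (π : Fin (r + 1) → Fin l)
    (hπsurj : Function.Surjective π) {s : ℝ} (hs0 : 0 < s) (hs1 : s ≤ 1) :
    ∀ ε : ℝ, 0 < ε → ∀ᶠ lam in atTop,
      Stmt12Aux.J (Stmt12Aux.W π) lam s / Stmt12Aux.J (Stmt12Aux.W π) lam 1 < s + ε := by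
  have hQc := Stmt12Aux.W_cont π
  have hQ0 := Stmt12Aux.W_nonneg π
  have hQinv := Stmt12Aux.W_inv π
  have hQub := Stmt12Aux.W_ub π
  have hQosc := Stmt12Aux.W_osc π hπsurj
  have hR0 : (0 : ℝ) < (r : ℝ) := by exact_mod_cast hr
  have hJpos : ∀ lam a : ℝ, 0 ≤ lam → 0 < a → 0 < Stmt12Aux.J (Stmt12Aux.W π) lam a := by
    intro lam a hlam ha
    have h1 := Stmt12Aux.J_pos_lb hQc hQ0 hlam ha.le (hQub a ha.le)
    have h2 : 0 < a ^ l * Real.exp (-lam * ((r : ℝ) * a ^ 2)) := by positivity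
    linarith
  intro ε hε
  obtain ⟨k, hk2, hak⟩ : ∃ k : ℕ, 2 ≤ k ∧ ((k : ℝ) * s + 1) / ((k : ℝ) - 1) < s + ε / 2 := by
    have h := (Stmt12Aux.lim_up s).eventually (gt_mem_nhds (show s < s + ε / 2 by linarith))
    exact ((eventually_ge_atTop 2).and h).exists
  have hk2R : (2 : ℝ) ≤ (k : ℝ) := by exact_mod_cast hk2
  have hkpos : (0 : ℝ) < (k : ℝ) := by linarith
  set v : ℝ := 1 / (k : ℝ) with hv_def
  set δ : ℝ := 1 / (k : ℝ) ^ 2 with hδ_def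
  have hv : 0 < v := by positivity
  have hδ : 0 < δ := by positivity
  set A := ⌈(k : ℝ) * s⌉₊ with hA_def
  have hA1 : 1 ≤ A := Nat.one_le_ceil_iff.mpr (by positivity)
  have hAub : (A : ℝ) ≤ (k : ℝ) * s + 1 := (Nat.ceil_lt_add_one (by positivity)).le
  have hAlb : (k : ℝ) * s ≤ (A : ℝ) := Nat.le_ceil _
  set m := k - 1 with hm_def
  have hm1 : 1 ≤ m := by omega
  have hmR : (m : ℝ) = (k : ℝ) - 1 := by
    rw [hm_def, Nat.cast_sub (by omega)]; simp
  have hmpos : (0 : ℝ) < (m : ℝ) := by rw [hmR]; linarith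
  set ε2 : ℝ := ε / 2 / 2 ^ l with hε2_def
  have hε2 : 0 < ε2 := by positivity
  filter_upwards [Stmt12Aux.tail_negligible hQc hQ0 hQinv hl hR0 hQub
    (add_pos hv hδ) hδ hε2, eventually_ge_atTop (0 : ℝ)] with lam htail hlam
  obtain ⟨X, hXdef⟩ : ∃ X, Stmt12Aux.J (Stmt12Aux.W π) lam (v + δ) = X := ⟨_, rfl⟩
  obtain ⟨E, hEdef⟩ : ∃ E, Real.exp (-lam * (δ ^ 2 / (r : ℝ))) = E := ⟨_, rfl⟩
  rw [hXdef, hEdef] at htail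
  have hX : 0 < X := by rw [← hXdef]; exact hJpos lam (v + δ) hlam (by positivity)
  have hE0 : 0 < E := by rw [← hEdef]; exact Real.exp_pos _
  have hsAv : s ≤ (A : ℝ) * v := by
    rw [hv_def, mul_one_div, le_div_iff₀ hkpos]
    linarith [hAlb, mul_comm s (k : ℝ)]
  have chain1 : Stmt12Aux.J (Stmt12Aux.W π) lam s ≤ (A : ℝ) * X + 2 ^ l * E := by
    calc Stmt12Aux.J (Stmt12Aux.W π) lam s
        ≤ Stmt12Aux.J (Stmt12Aux.W π) lam ((A : ℝ) * v) :=
          Stmt12Aux.J_mono hQc hQ0 hlam hsAv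
      _ ≤ (A : ℝ) * Stmt12Aux.J (Stmt12Aux.W π) lam (v + δ)
            + ((A : ℝ) * v) ^ l * Real.exp (-lam * (δ ^ 2 / (r : ℝ))) :=
          Stmt12Aux.J_up hQc hQ0 hQinv hl hR0 hQosc hlam hv hδ.le hA1
      _ = (A : ℝ) * X + ((A : ℝ) * v) ^ l * E := by rw [hXdef, hEdef]
      _ ≤ (A : ℝ) * X + 2 ^ l * E := by
          have hAv2 : (A : ℝ) * v ≤ 2 := by
            rw [hv_def, mul_one_div, div_le_iff₀ hkpos]
            nlinarith [hAub, hs1, hk2R]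
          have hAv0 : (0 : ℝ) ≤ (A : ℝ) * v := by positivity
          have h5 := pow_le_pow_left₀ hAv0 hAv2 l
          have h6 := mul_le_mul_of_nonneg_right h5 hE0.le
          linarith
  have hm1v : (m : ℝ) * (v + δ) ≤ 1 := by
    have he : (m : ℝ) * (v + δ) = ((k : ℝ) ^ 2 - 1) / (k : ℝ) ^ 2 := by
      rw [hmR, hv_def, hδ_def]; field_simp; ring
    rw [he, div_le_one (by positivity)]
    linarith
  have chain2 : (m : ℝ) * X ≤ Stmt12Aux.J (Stmt12Aux.W π) lam 1 := by
    calc (m : ℝ) * X = (m : ℝ) * Stmt12Aux.J (Stmt12Aux.W π) lam (v + δ) := by rw [hXdef]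
      _ ≤ Stmt12Aux.J (Stmt12Aux.W π) lam ((m : ℝ) * (v + δ)) :=
          Stmt12Aux.J_low hQc hQ0 hQinv hl hlam (by positivity) m
      _ ≤ Stmt12Aux.J (Stmt12Aux.W π) lam 1 := Stmt12Aux.J_mono hQc hQ0 hlam hm1v
  have hden : 0 < Stmt12Aux.J (Stmt12Aux.W π) lam 1 := hJpos lam 1 hlam one_pos
  rw [div_lt_iff₀ hden]
  have hkk1 : (0 : ℝ) < (k : ℝ) - 1 := by linarith
  have hak' : (k : ℝ) * s + 1 < (s + ε / 2) * ((k : ℝ) - 1) := by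
    have := (div_lt_iff₀ hkk1).mp hak
    linarith
  have hAm : (A : ℝ) ≤ (s + ε / 2) * (m : ℝ) := by
    rw [hmR]; linarith
  have e2l : (2 : ℝ) ^ l * ε2 = ε / 2 := by
    rw [hε2_def]; field_simp
  calc Stmt12Aux.J (Stmt12Aux.W π) lam s
      ≤ (A : ℝ) * X + 2 ^ l * E := chain1
    _ < (A : ℝ) * X + 2 ^ l * (ε2 * X) := by
        have h4 : (0 : ℝ) < 2 ^ l := by positivity
        have h5 := mul_lt_mul_of_pos_left htail h4
        linarith
    _ = (A : ℝ) * X + (ε / 2) * X := by rw [← mul_assoc, e2l]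
    _ ≤ ((s + ε / 2) * (m : ℝ)) * X + (ε / 2) * X := by
        linarith [mul_le_mul_of_nonneg_right hAm hX.le]
    _ ≤ ((s + ε / 2) * (m : ℝ)) * X + (ε / 2) * ((m : ℝ) * X) := by
        have hm1R : (1 : ℝ) ≤ (m : ℝ) := by rw [hmR]; linarith
        have h9 : X ≤ (m : ℝ) * X := le_mul_of_one_le_left hX.le hm1R
        linarith [mul_le_mul_of_nonneg_left h9 (show (0:ℝ) ≤ ε / 2 by linarith)]
    _ = (s + ε) * ((m : ℝ) * X) := by ring
    _ ≤ (s + ε) * Stmt12Aux.J (Stmt12Aux.W π) lam 1 := by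
        have hsε : (0 : ℝ) ≤ s + ε := by linarith
        exact mul_le_mul_of_nonneg_left chain2 hsε

set_option maxHeartbeats 1000000 in
lemma lb_event {r l : ℕ} (hr : 0 < r) (hl : 0 < l) (π : Fin (r + 1) → Fin l)
    (hπsurj : Function.Surjective π) {s : ℝ} (hs0 : 0 < s) (hs1 : s ≤ 1) :
    ∀ ε : ℝ, 0 < ε → ∀ᶠ lam in atTop,
      s - ε < Stmt12Aux.J (Stmt12Aux.W π) lam s / Stmt12Aux.J (Stmt12Aux.W π) lam 1 := by
  have hQc := Stmt12Aux.W_cont π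
  have hQ0 := Stmt12Aux.W_nonneg π
  have hQinv := Stmt12Aux.W_inv π
  have hQub := Stmt12Aux.W_ub π
  have hQosc := Stmt12Aux.W_osc π hπsurj
  have hR0 : (0 : ℝ) < (r : ℝ) := by exact_mod_cast hr
  have hJpos : ∀ lam a : ℝ, 0 ≤ lam → 0 < a → 0 < Stmt12Aux.J (Stmt12Aux.W π) lam a := by
    intro lam a hlam ha
    have h1 := Stmt12Aux.J_pos_lb hQc hQ0 hlam ha.le (hQub a ha.le)
    have h2 : 0 < a ^ l * Real.exp (-lam * ((r : ℝ) * a ^ 2)) := by positivity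
    linarith
  intro ε hε
  rcases le_or_gt s ε with hεs | hεs
  · filter_upwards [eventually_ge_atTop (0 : ℝ)] with lam hlam
    have hnum : 0 < Stmt12Aux.J (Stmt12Aux.W π) lam s := hJpos lam s hlam hs0
    have hden : 0 < Stmt12Aux.J (Stmt12Aux.W π) lam 1 := hJpos lam 1 hlam one_pos
    have := div_pos hnum hden
    linarith
  · obtain ⟨k, hk2, hbk⟩ : ∃ k : ℕ, 2 ≤ k ∧ s - ε < ((k : ℝ) * s - 1) / ((k : ℝ) + 3) := by
      have h := (Stmt12Aux.lim_lo s).eventually (lt_mem_nhds (show s - ε < s by linarith))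
      exact ((eventually_ge_atTop 2).and h).exists
    have hk2R : (2 : ℝ) ≤ (k : ℝ) := by exact_mod_cast hk2
    have hkpos : (0 : ℝ) < (k : ℝ) := by linarith
    set v : ℝ := 1 / (k : ℝ) with hv_def
    set δ : ℝ := 1 / (k : ℝ) ^ 2 with hδ_def
    set w : ℝ := ((k : ℝ) - 1) / (k : ℝ) ^ 2 with hw_def
    have hv : 0 < v := by positivity
    have hδpos : 0 < δ := by positivity
    have hw : 0 < w := div_pos (by linarith) (by positivity)
    have hwδ : w + δ = v := by
      rw [hw_def, hδ_def, hv_def]; field_simp; ring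
    set B := ⌊(k : ℝ) * s⌋₊ with hB_def
    set M := k + 2 with hM_def
    have hBle : (B : ℝ) ≤ (k : ℝ) * s := Nat.floor_le (by positivity)
    have hBgt : (k : ℝ) * s - 1 < (B : ℝ) := Nat.sub_one_lt_floor _
    have hM1 : 1 ≤ M := by omega
    have hMR : (M : ℝ) = (k : ℝ) + 2 := by rw [hM_def]; push_cast; ring
    have hMw1 : 1 ≤ (M : ℝ) * w := by
      have he : (M : ℝ) * w = ((k : ℝ) ^ 2 + (k : ℝ) - 2) / (k : ℝ) ^ 2 := by
        rw [hMR, hw_def]; field_simp; ring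
      rw [he, le_div_iff₀ (by positivity)]
      nlinarith
    have hMw2 : (M : ℝ) * w ≤ 2 := by
      have he : (M : ℝ) * w = ((k : ℝ) ^ 2 + (k : ℝ) - 2) / (k : ℝ) ^ 2 := by
        rw [hMR, hw_def]; field_simp; ring
      rw [he, div_le_iff₀ (by positivity)]
      nlinarith
    set ε2 : ℝ := 1 / 2 ^ l with hε2_def
    have hε2 : 0 < ε2 := by positivity
    filter_upwards [Stmt12Aux.tail_negligible hQc hQ0 hQinv hl hR0 hQub
      hv hδpos hε2, eventually_ge_atTop (0 : ℝ)] with lam htail hlam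
    obtain ⟨X, hXdef⟩ : ∃ X, Stmt12Aux.J (Stmt12Aux.W π) lam v = X := ⟨_, rfl⟩
    obtain ⟨E, hEdef⟩ : ∃ E, Real.exp (-lam * (δ ^ 2 / (r : ℝ))) = E := ⟨_, rfl⟩
    rw [hXdef, hEdef] at htail
    have hX : 0 < X := by rw [← hXdef]; exact hJpos lam v hlam hv
    have hE0 : 0 < E := by rw [← hEdef]; exact Real.exp_pos _
    have hBv : (B : ℝ) * v ≤ s := by
      rw [hv_def, mul_one_div, div_le_iff₀ hkpos]
      linarith [hBle, mul_comm s (k : ℝ)]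
    have hnum : (B : ℝ) * X ≤ Stmt12Aux.J (Stmt12Aux.W π) lam s := by
      calc (B : ℝ) * X = (B : ℝ) * Stmt12Aux.J (Stmt12Aux.W π) lam v := by rw [hXdef]
        _ ≤ Stmt12Aux.J (Stmt12Aux.W π) lam ((B : ℝ) * v) :=
            Stmt12Aux.J_low hQc hQ0 hQinv hl hlam hv B
        _ ≤ Stmt12Aux.J (Stmt12Aux.W π) lam s := Stmt12Aux.J_mono hQc hQ0 hlam hBv
    have hdenle : Stmt12Aux.J (Stmt12Aux.W π) lam 1 ≤ (M : ℝ) * X + 2 ^ l * E := by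
      calc Stmt12Aux.J (Stmt12Aux.W π) lam 1
          ≤ Stmt12Aux.J (Stmt12Aux.W π) lam ((M : ℝ) * w) :=
            Stmt12Aux.J_mono hQc hQ0 hlam hMw1
        _ ≤ (M : ℝ) * Stmt12Aux.J (Stmt12Aux.W π) lam (w + δ)
              + ((M : ℝ) * w) ^ l * Real.exp (-lam * (δ ^ 2 / (r : ℝ))) :=
            Stmt12Aux.J_up hQc hQ0 hQinv hl hR0 hQosc hlam hw hδpos.le hM1
        _ = (M : ℝ) * X + ((M : ℝ) * w) ^ l * E := by rw [hwδ, hXdef, hEdef]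
        _ ≤ (M : ℝ) * X + 2 ^ l * E := by
            have hMw0 : (0 : ℝ) ≤ (M : ℝ) * w := by positivity
            have h5 := pow_le_pow_left₀ hMw0 hMw2 l
            have h6 := mul_le_mul_of_nonneg_right h5 hE0.le
            linarith
    have hden : 0 < Stmt12Aux.J (Stmt12Aux.W π) lam 1 := hJpos lam 1 hlam one_pos
    rw [lt_div_iff₀ hden]
    have hE2 : 2 ^ l * E < X := by
      have h7 := mul_lt_mul_of_pos_left htail (show (0:ℝ) < 2 ^ l by positivity)
      have h8 : (2 : ℝ) ^ l * (ε2 * X) = X := by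
        rw [hε2_def]; field_simp
      linarith
    have hsum : Stmt12Aux.J (Stmt12Aux.W π) lam 1 < ((M : ℝ) + 1) * X := by
      have : ((M : ℝ) + 1) * X = (M : ℝ) * X + X := by ring
      linarith
    have hcross : (s - ε) * ((k : ℝ) + 3) < (k : ℝ) * s - 1 :=
      (lt_div_iff₀ (by linarith)).mp hbk
    have hsε : (0 : ℝ) < s - ε := by linarith
    calc (s - ε) * Stmt12Aux.J (Stmt12Aux.W π) lam 1
        < (s - ε) * (((M : ℝ) + 1) * X) := mul_lt_mul_of_pos_left hsum hsε
      _ = ((s - ε) * ((k : ℝ) + 3)) * X := by rw [hMR]; ring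
      _ ≤ ((k : ℝ) * s - 1) * X := mul_le_mul_of_nonneg_right hcross.le hX.le
      _ ≤ (B : ℝ) * X := mul_le_mul_of_nonneg_right hBgt.le hX.le
      _ ≤ Stmt12Aux.J (Stmt12Aux.W π) lam s := hnum

end

end Stmt12Aux

/-- For a closed surjective walk `π` on `l` vertices, the ratio of
the Gaussian-kernel walk integral over `[0,s]^l` to the one over `[0,1]^l` tends
to `s` as the length-scale parameter `λ → ∞`. -/
theorem stmt12 (r l : ℕ) (hr : 0 < r) (hl : 0 < l)
    (π : Fin (r + 1) → Fin l) (hπ0 : π 0 = π (Fin.last r))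
    (hπsurj : Function.Surjective π)
    (s : ℝ) (hs : s ∈ Set.Ioc (0 : ℝ) 1)
    (I : ℝ → ℝ → ℝ)
    (hI : ∀ lam s' : ℝ,
      I lam s' = ∫ t : Fin l → ℝ in Set.univ.pi fun _ => Set.Icc 0 s',
        Real.exp (-lam * ∑ i : Fin r, (t (π i.castSucc) - t (π i.succ)) ^ 2)) :
    Filter.Tendsto (fun lam : ℝ => I lam s / I lam 1) Filter.atTop (nhds s) := by
  obtain ⟨hs0, hs1⟩ := hs
  have hIJ : ∀ lam a : ℝ, I lam a = Stmt12Aux.J (Stmt12Aux.W π) lam a := by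
    intro lam a
    rw [hI lam a]
    simp only [Stmt12Aux.J, Stmt12Aux.box, Stmt12Aux.W]
  rw [Metric.tendsto_nhds]
  intro ε hε
  filter_upwards [Stmt12Aux.ub_event hr hl π hπsurj hs0 hs1 ε hε,
    Stmt12Aux.lb_event hr hl π hπsurj hs0 hs1 ε hε] with lam h1 h2
  rw [hIJ lam s, hIJ lam 1] at *
  rw [Real.dist_eq, abs_sub_lt_iff]
  exact ⟨by linarith, by linarith⟩
end

section
/- Let κ : ℝ × ℝ → ℝ be a bounded Borel-measurable function, let n and r be positive integers, and let x_1, ..., x_n be i.i.d. random variables uniform on [0, 1]. Define the random matrix A = (κ(x_i, x_j))_{1 ≤ i,j ≤ n}. Then E[tr(A^r)] = ∑_{l=1}^{min(r, n)} C(n, l) · J_l, where J_l = ∑_ψ ∫_{[0,1]^l} ∏_{i=1}^r κ(t_{ψ(i−1)}, t_{ψ(i)}) dt_1 ⋯ dt_l and the inner sum ranges over all surjective functions ψ : {0, 1, ..., r} → {1, ..., l} with ψ(0) = ψ(r). -/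
/-!
Expanding `(A ^ r).trace` entrywise writes it as a sum over closed walks `φ` of length `r` on
`Fin n` of the products `∏ κ (x (φ (k - 1))) (x (φ k))`. Group the walks by their vertex set
`S`: a closed walk with vertex set `S` is exactly `g ∘ ψ` for the increasing enumeration
`g : Fin #S → S` and a surjective closed walk `ψ` onto `Fin #S`. As `g` is injective, the points
`x (g j)` are i.i.d. uniform, so the expectation of the walk product of `g ∘ ψ` is the integral
over the cube `[0, 1] ^ #S` appearing in `J #S`. Hence `E[tr(A ^ r)] = ∑ S, J #S`, and counting
the sets `S` of each size gives the binomial coefficients. Sizes `0` and `> r` contribute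
nothing, since a closed walk of length `r > 0` visits at most `r` vertices.
-/

open MeasureTheory ProbabilityTheory Finset

namespace Matrix

variable {ι R : Type*} [Fintype ι] [DecidableEq ι] [CommSemiring R]

theorem pow_apply_eq_sum_walks (M : Matrix ι ι R) (r : ℕ) (i j : ι) :
    (M ^ r) i j = ∑ f : Fin (r + 1) → ι with f 0 = i ∧ f (Fin.last r) = j,
      ∏ k : Fin r, M (f k.castSucc) (f k.succ) := by
  rw [sum_filter]
  induction r generalizing j with
  | zero =>
    rw [← (Equiv.funUnique (Fin 1) ι).symm.sum_comp]
    simp [one_apply, ite_and, eq_comm]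
  | succ r ih =>
    rw [← (Fin.snocEquiv fun _ => ι).sum_comp, Fintype.sum_prod_type_right, pow_succ, mul_apply]
    simp_rw [ih, sum_mul, ite_mul, zero_mul]
    rw [sum_comm]
    refine sum_congr rfl fun g _ => ?_
    have hsnoc (k : Fin r) : Fin.snoc (α := fun _ => ι) g j k.castSucc.succ = g k.succ := by
      rw [Fin.succ_castSucc, Fin.snoc_castSucc]
    simp [Fin.prod_univ_castSucc, ite_and, hsnoc]

theorem trace_pow_eq_sum_closed_walks (M : Matrix ι ι R) (r : ℕ) :
    (M ^ r).trace = ∑ f : Fin (r + 1) → ι with f 0 = f (Fin.last r),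
      ∏ k : Fin r, M (f k.castSucc) (f k.succ) := by
  rw [trace, ← sum_fiberwise _ fun f : Fin (r + 1) → ι => f 0]
  refine sum_congr rfl fun i _ => ?_
  rw [diag_apply, pow_apply_eq_sum_walks, filter_filter]
  refine sum_congr (filter_congr fun f _ => ?_) fun _ _ => rfl
  constructor
  · rintro ⟨rfl, h⟩
    exact ⟨h.symm, rfl⟩
  · rintro ⟨h, rfl⟩
    exact ⟨rfl, h.symm⟩

end Matrix

theorem card_le_of_surjective_closed_walk {β : Type*} [Fintype β] {r : ℕ} (hr : 0 < r)
    {ψ : Fin (r + 1) → β} (hclosed : ψ 0 = ψ (Fin.last r)) (hψ : Function.Surjective ψ) :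
    Fintype.card β ≤ r := by
  have hinit : Function.Surjective fun k : Fin r => ψ k.castSucc := by
    intro b
    obtain ⟨k, rfl⟩ := hψ b
    induction k using Fin.lastCases with
    | last => exact ⟨⟨0, hr⟩, hclosed⟩
    | cast k => exact ⟨k, rfl⟩
  simpa using Fintype.card_le_of_surjective _ hinit

theorem sum_filter_image_eq_sum_filter_surjective {α β γ M : Type*} [Fintype α] [DecidableEq α]
    [Fintype β] [DecidableEq β] [Fintype γ] [DecidableEq γ] [AddCommMonoid M]
    (a₀ a₁ : α) (S : Finset β) {g : γ → β} (hg : Function.Injective g)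
    (hgS : Set.range g = S) (F : (α → β) → M) :
    ∑ φ : α → β with φ a₀ = φ a₁ ∧ univ.image φ = S, F φ =
      ∑ ψ : α → γ with ψ a₀ = ψ a₁ ∧ Function.Surjective ψ, F (g ∘ ψ) := by
  have hmemS (b : β) : b ∈ S ↔ ∃ c, g c = b := by rw [← mem_coe, ← hgS, Set.mem_range]
  symm
  refine sum_bij (fun ψ _ => g ∘ ψ) ?_ ?_ ?_ fun _ _ => rfl
  · intro ψ hψ
    simp only [mem_filter, mem_univ, true_and] at hψ ⊢
    refine ⟨congrArg g hψ.1, ?_⟩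
    ext b
    simp [hmemS, hψ.2.exists]
  · intro ψ _ ψ' _ h
    exact funext fun a => hg (congrFun h a)
  · intro φ hφ
    simp only [mem_filter, mem_univ, true_and] at hφ
    have hφS (a : α) : ∃ c, g c = φ a := (hmemS _).1 (hφ.2 ▸ mem_image_of_mem φ (mem_univ a))
    choose ψ hψ using hφS
    refine ⟨ψ, ?_, funext fun a => hψ a⟩
    simp only [mem_filter, mem_univ, true_and]
    refine ⟨hg ((hψ a₀).trans (hφ.1.trans (hψ a₁).symm)), fun c => ?_⟩
    obtain ⟨a, -, ha⟩ := mem_image.1 (hφ.2 ▸ (hmemS (g c)).2 ⟨c, rfl⟩)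
    exact ⟨a, hg ((hψ a).trans ha)⟩

namespace ProbabilityTheory.iIndepFun

variable {Ω ι ι' β : Type*} [MeasurableSpace Ω] {P : Measure Ω} [MeasurableSpace β]
  [Fintype ι'] {μ : Measure β} {x : ι → Ω → β} {g : ι' → ι}

theorem map_comp_injective_eq_pi (hxindep : iIndepFun x P) (hxmeas : ∀ i, Measurable (x i))
    (hxlaw : ∀ i, P.map (x i) = μ) (hg : Function.Injective g) :
    P.map (fun ω j => x (g j) ω) = Measure.pi fun _ => μ := by
  rw [(hxindep.precomp hg).map_fun_eq_pi_map fun j => (hxmeas (g j)).aemeasurable]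
  simp_rw [hxlaw]

theorem integral_comp_injective_eq_integral_pi {E : Type*} [NormedAddCommGroup E]
    [NormedSpace ℝ E] (hxindep : iIndepFun x P) (hxmeas : ∀ i, Measurable (x i))
    (hxlaw : ∀ i, P.map (x i) = μ) (hg : Function.Injective g) {F : (ι' → β) → E}
    (hF : StronglyMeasurable F) :
    ∫ ω, F (fun j => x (g j) ω) ∂P = ∫ t, F t ∂(Measure.pi fun _ => μ) := by
  rw [← hxindep.map_comp_injective_eq_pi hxmeas hxlaw hg,
    integral_map (measurable_pi_lambda _ fun j => hxmeas (g j)).aemeasurable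
      hF.aestronglyMeasurable]

end ProbabilityTheory.iIndepFun

section WalkProduct

variable {Ω ι : Type*} {κ : ℝ → ℝ → ℝ} {r : ℕ}

theorem measurable_walk_product {α : Type*} [MeasurableSpace α]
    (hκ : Measurable fun p : ℝ × ℝ => κ p.1 p.2) {y : ι → α → ℝ} (hy : ∀ i, Measurable (y i))
    (φ : Fin (r + 1) → ι) :
    Measurable fun a => ∏ k : Fin r, κ (y (φ k.castSucc) a) (y (φ k.succ) a) :=
  Finset.measurable_prod _ fun _ _ => hκ.comp ((hy _).prodMk (hy _))

theorem integrable_walk_product [MeasurableSpace Ω] {P : Measure Ω} [IsFiniteMeasure P]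
    (hκ : Measurable fun p : ℝ × ℝ => κ p.1 p.2) {C : ℝ} (hC : ∀ s t, |κ s t| ≤ C)
    {x : ι → Ω → ℝ} (hx : ∀ i, Measurable (x i)) (φ : Fin (r + 1) → ι) :
    Integrable (fun ω => ∏ k : Fin r, κ (x (φ k.castSucc) ω) (x (φ k.succ) ω)) P := by
  refine .of_bound (measurable_walk_product hκ hx φ).aestronglyMeasurable (C ^ r)
    (ae_of_all _ fun ω => ?_)
  rw [Real.norm_eq_abs, abs_prod]
  calc ∏ k : Fin r, |κ (x (φ k.castSucc) ω) (x (φ k.succ) ω)|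
      ≤ ∏ _k : Fin r, C := prod_le_prod (fun _ _ => abs_nonneg _) fun _ _ => hC _ _
    _ = C ^ r := by simp

theorem integral_walk_product_eq_setIntegral_cube {ι' : Type*} [Fintype ι'] [MeasurableSpace Ω]
    {P : Measure Ω} (hκ : Measurable fun p : ℝ × ℝ => κ p.1 p.2) {x : ι → Ω → ℝ}
    (hx : ∀ i, Measurable (x i)) (hxindep : iIndepFun x P)
    (hxunif : ∀ i, P.map (x i) = volume.restrict (Set.Icc (0 : ℝ) 1))
    {g : ι' → ι} (hg : Function.Injective g) (ψ : Fin (r + 1) → ι') :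
    ∫ ω, ∏ k : Fin r, κ (x (g (ψ k.castSucc)) ω) (x (g (ψ k.succ)) ω) ∂P =
      ∫ t : ι' → ℝ in Set.univ.pi fun _ => Set.Icc (0 : ℝ) 1,
        ∏ k : Fin r, κ (t (ψ k.castSucc)) (t (ψ k.succ)) := by
  rw [hxindep.integral_comp_injective_eq_integral_pi hx hxunif hg
      (measurable_walk_product hκ measurable_pi_apply ψ).stronglyMeasurable,
    volume_pi, Measure.restrict_pi_pi]

end WalkProduct

theorem stmt15_general
    {Ω : Type*} [MeasureSpace Ω] [IsProbabilityMeasure (ℙ : Measure Ω)]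
    (κ : ℝ → ℝ → ℝ)
    (hκmeas : Measurable fun p : ℝ × ℝ => κ p.1 p.2)
    (hκbdd : ∃ C : ℝ, ∀ x y : ℝ, |κ x y| ≤ C)
    (n r : ℕ) (hr : 0 < r)
    (x : Fin n → Ω → ℝ) (hxmeas : ∀ i, Measurable (x i))
    (hxindep : iIndepFun x ℙ)
    (hxunif : ∀ i, Measure.map (x i) ℙ = volume.restrict (Set.Icc (0 : ℝ) 1))
    (A : Ω → Matrix (Fin n) (Fin n) ℝ)
    (hA : ∀ ω, A ω = Matrix.of fun i j => κ (x i ω) (x j ω))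
    (J : ℕ → ℝ)
    (hJ : ∀ l : ℕ,
      J l = ∑ ψ ∈ Finset.univ.filter
          (fun ψ : Fin (r + 1) → Fin l =>
            ψ 0 = ψ (Fin.last r) ∧ Function.Surjective ψ),
        ∫ t : Fin l → ℝ in Set.univ.pi fun _ => Set.Icc (0 : ℝ) 1,
          ∏ i : Fin r, κ (t (ψ i.castSucc)) (t (ψ i.succ))) :
    ∫ ω : Ω, ((A ω) ^ r).trace ∂ℙ =
      ∑ l ∈ Finset.Icc 1 (min r n), (n.choose l : ℝ) * J l := by
  obtain ⟨C, hC⟩ := hκbdd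
  have hJ_eq_zero (l : ℕ) (hl : l = 0 ∨ r < l) : J l = 0 := by
    refine (hJ l).trans (sum_eq_zero fun ψ hψ => ?_)
    simp only [mem_filter, mem_univ, true_and] at hψ
    have hle := card_le_of_surjective_closed_walk hr hψ.1 hψ.2
    rw [Fintype.card_fin] at hle
    have := (ψ 0).pos
    omega
  calc ∫ ω, ((A ω) ^ r).trace ∂ℙ
      = ∑ φ : Fin (r + 1) → Fin n with φ 0 = φ (Fin.last r),
          ∫ ω, ∏ k : Fin r, κ (x (φ k.castSucc) ω) (x (φ k.succ) ω) ∂ℙ := by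
        simp_rw [hA, Matrix.trace_pow_eq_sum_closed_walks]
        exact integral_finsetSum _ fun φ _ => integrable_walk_product hκmeas hC hxmeas φ
    _ = ∑ S : Finset (Fin n), J #S := by
        rw [← sum_fiberwise _ fun φ : Fin (r + 1) → Fin n => univ.image φ]
        refine sum_congr rfl fun S _ => ?_
        rw [filter_filter, hJ, sum_filter_image_eq_sum_filter_surjective _ _ S
          (S.orderEmbOfFin rfl).injective (S.range_orderEmbOfFin rfl)]
        exact sum_congr rfl fun ψ _ =>
          integral_walk_product_eq_setIntegral_cube hκmeas hxmeas hxindep hxunif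
            (S.orderEmbOfFin rfl).injective ψ
    _ = ∑ l ∈ range (n + 1), (n.choose l : ℝ) * J l := by
        rw [← powerset_univ, sum_powerset_apply_card]
        simp
    _ = ∑ l ∈ Icc 1 (min r n), (n.choose l : ℝ) * J l := by
        refine (sum_subset (fun l hl => ?_) fun l hl hl' => ?_).symm
        · simp only [mem_Icc, mem_range] at hl ⊢
          omega
        · simp only [mem_Icc, mem_range, not_and_or, not_le] at hl hl'
          rw [hJ_eq_zero l (by omega), mul_zero]

/-- Expansion of `E[tr(A^r)]` for the kernel matrix on `n` i.i.d.
uniform points, grouped by the number `l` of distinct vertices visited: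
`E[tr(A^r)] = ∑_{l=1}^{min(r,n)} C(n,l) · J_l`, where `J_l` sums the cube
integrals over all surjective closed walks on `l` labeled vertices. -/
theorem stmt15
    {Ω : Type*} [MeasureSpace Ω] [IsProbabilityMeasure (ℙ : Measure Ω)]
    (κ : ℝ → ℝ → ℝ)
    (hκmeas : Measurable fun p : ℝ × ℝ => κ p.1 p.2)
    (hκbdd : ∃ C : ℝ, ∀ x y : ℝ, |κ x y| ≤ C)
    (n r : ℕ) (hn : 0 < n) (hr : 0 < r)
    (x : Fin n → Ω → ℝ) (hxmeas : ∀ i, Measurable (x i))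
    (hxindep : iIndepFun x ℙ)
    (hxunif : ∀ i, Measure.map (x i) ℙ = volume.restrict (Set.Icc (0 : ℝ) 1))
    (A : Ω → Matrix (Fin n) (Fin n) ℝ)
    (hA : ∀ ω, A ω = Matrix.of fun i j => κ (x i ω) (x j ω))
    (J : ℕ → ℝ)
    (hJ : ∀ l : ℕ,
      J l = ∑ ψ ∈ Finset.univ.filter
          (fun ψ : Fin (r + 1) → Fin l =>
            ψ 0 = ψ (Fin.last r) ∧ Function.Surjective ψ),
        ∫ t : Fin l → ℝ in Set.univ.pi fun _ => Set.Icc (0 : ℝ) 1,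
          ∏ i : Fin r, κ (t (ψ i.castSucc)) (t (ψ i.succ))) :
    ∫ ω : Ω, ((A ω) ^ r).trace ∂ℙ =
      ∑ l ∈ Finset.Icc 1 (min r n), (n.choose l : ℝ) * J l :=
  stmt15_general κ hκmeas hκbdd n r hr x hxmeas hxindep hxunif A hA J hJ
end
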